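/- arXiv:2210.16971 — 4 statements merged into one kernel-verified Lean document; each statement's English description precedes it below -/
import Mathlib

section
/- Let B be an oriented graph admitting a homomorphism to K2→, so that its underlying undirected graph B̄ is bipartite with bipartition V₁ ⊔ V₂ given by the homomorphism preimages and every edge of B is oriented from V₁ to V₂. Then B̄ has the asymmetric Sidorenko property if and only if B has the directed Sidorenko property. -/
open MeasureTheory Filter Topology

/-- Homomorphism density between finite directed graphs: the number of maps
`V(A) → V(G)` that are homomorphisms, divided by `v(G)^{v(A)}`. -/
noncomputable def homDensity {α β : Type} [Fintype α] [Fintype β]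
    (A : α → α → Prop) (G : β → β → Prop) : ℝ :=
  (Nat.card {f : α → β // ∀ x y, A x y → G (f x) (f y)} : ℝ) /
    (Fintype.card β : ℝ) ^ (Fintype.card α)

/-- Number of edges of a directed graph. -/
noncomputable def edgeCount {α : Type} [Fintype α] (A : α → α → Prop) : ℕ :=
  Nat.card {p : α × α // A p.1 p.2}

/-- The oriented graph `K2→`: two vertices, one directed edge. -/
def K2dir : Fin 2 → Fin 2 → Prop := fun i j => i = 0 ∧ j = 1

/-- A directed graph is an oriented graph: no self-loops and, for each pair of
distinct vertices, at most one of the two possible directed edges. -/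
def IsOriented {α : Type} (A : α → α → Prop) : Prop :=
  (∀ x, ¬ A x x) ∧ ∀ x y, A x y → ¬ A y x

open Classical in
/-- Graphon homomorphism density of a directed graph `A` in `W`:
`t(A, W) = ∫_{[0,1]^{V(A)}} ∏_{(i,j) ∈ E(A)} W(x_i, x_j) ∏ dx_i`. -/
noncomputable def graphonDensity {α : Type} [Fintype α]
    (A : α → α → Prop) (W : ℝ → ℝ → ℝ) : ℝ :=
  ∫ x : α → ℝ in Set.univ.pi fun _ => Set.Icc (0:ℝ) 1,
    ∏ p : α × α, if A p.1 p.2 then W (x p.1) (x p.2) else 1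

/-- The directed Sidorenko property: `t(B, G) ≥ t(K2→, G)^{e(B)}` for every
(nonempty) oriented graph `G`. -/
def DirSidorenko {β : Type} [Fintype β] (B : β → β → Prop) : Prop :=
  ∀ (n : ℕ), 0 < n → ∀ G : Fin n → Fin n → Prop, IsOriented G →
    homDensity B G ≥ homDensity K2dir G ^ edgeCount B

open Classical in
/-- Bipartite graphon homomorphism density of the bipartite graph with parts `α₁, α₂`
and edge relation `E` in the graphon `W`. -/
noncomputable def bipGraphonDensity {α₁ α₂ : Type} [Fintype α₁] [Fintype α₂]
    (E : α₁ → α₂ → Prop) (W : ℝ → ℝ → ℝ) : ℝ :=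
  ∫ xy : (α₁ → ℝ) × (α₂ → ℝ) in
      (Set.univ.pi fun _ => Set.Icc (0:ℝ) 1) ×ˢ (Set.univ.pi fun _ => Set.Icc (0:ℝ) 1),
    ∏ p : α₁ × α₂, if E p.1 p.2 then W (xy.1 p.1) (xy.2 p.2) else 1

/-- Number of edges of a bipartite graph with fixed bipartition. -/
noncomputable def bipEdgeCount {α₁ α₂ : Type} [Fintype α₁] [Fintype α₂]
    (E : α₁ → α₂ → Prop) : ℕ :=
  Nat.card {p : α₁ × α₂ // E p.1 p.2}

/-- The directed graph obtained from a bipartite graph (with parts `α₁, α₂` and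
edge relation `E`) by orienting every edge from the first part to the second. -/
def orient {α₁ α₂ : Type} (E : α₁ → α₂ → Prop) : (α₁ ⊕ α₂) → (α₁ ⊕ α₂) → Prop :=
  fun u v => match u, v with
  | Sum.inl a, Sum.inr b => E a b
  | _, _ => False

/-- Bipartite homomorphism density between finite bipartite graphs: the fraction of
part-respecting vertex maps that are homomorphisms. -/
noncomputable def bipHomDensity {α₁ α₂ : Type} [Fintype α₁] [Fintype α₂] {n m : ℕ}
    (E : α₁ → α₂ → Prop) (F : Fin n → Fin m → Prop) : ℝ :=
  (Nat.card {fg : (α₁ → Fin n) × (α₂ → Fin m) // ∀ a b, E a b → F (fg.1 a) (fg.2 b)} : ℝ) /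
    ((n : ℝ) ^ (Fintype.card α₁) * (m : ℝ) ^ (Fintype.card α₂))

/-- The asymmetric Sidorenko property for a bipartite graph with fixed bipartition:
for every (nonempty) bipartite graph `H` with parts `U₁, U₂` and edge set `F`, the
fraction of part-respecting maps that are homomorphisms is at least
`(|F|/(|U₁||U₂|))^{e(A)}`. -/
def AsymSidorenko {α₁ α₂ : Type} [Fintype α₁] [Fintype α₂] (E : α₁ → α₂ → Prop) : Prop :=
  ∀ (n m : ℕ), 0 < n → 0 < m → ∀ F : Fin n → Fin m → Prop,
    bipHomDensity E F ≥
      ((Nat.card {p : Fin n × Fin m // F p.1 p.2} : ℝ) / ((n : ℝ) * m)) ^ bipEdgeCount E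

section Aux

open Filter

lemma card_K2hom {β : Type} (G : β → β → Prop) :
    Nat.card {f : Fin 2 → β // ∀ x y, K2dir x y → G (f x) (f y)}
      = Nat.card {p : β × β // G p.1 p.2} := by
  apply Nat.card_congr
  refine Equiv.subtypeEquiv (piFinTwoEquiv fun _ => β) ?_
  intro f
  constructor
  · exact fun h => h 0 1 ⟨rfl, rfl⟩
  · intro h x y hxy
    obtain ⟨rfl, rfl⟩ := hxy
    exact h

lemma card_hom_orient {α₁ α₂ β : Type} (E : α₁ → α₂ → Prop) (G : β → β → Prop) :
    Nat.card {f : α₁ ⊕ α₂ → β // ∀ x y, orient E x y → G (f x) (f y)}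
      = Nat.card {fg : (α₁ → β) × (α₂ → β) // ∀ a b, E a b → G (fg.1 a) (fg.2 b)} := by
  apply Nat.card_congr
  refine Equiv.subtypeEquiv (Equiv.sumArrowEquivProdArrow α₁ α₂ β) ?_
  intro f
  constructor
  · exact fun h a b hab => h (.inl a) (.inr b) hab
  · intro h x y hxy
    cases x with
    | inl a => cases y with
      | inl a' => exact absurd hxy (by simp [orient])
      | inr b => exact h a b hxy
    | inr b => cases y <;> exact absurd hxy (by simp [orient])

lemma edgeCount_orient_eq {α₁ α₂ : Type} (E : α₁ → α₂ → Prop) :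
    Nat.card {p : (α₁ ⊕ α₂) × (α₁ ⊕ α₂) // orient E p.1 p.2}
      = Nat.card {p : α₁ × α₂ // E p.1 p.2} := by
  apply Nat.card_congr
  refine ⟨fun p => ?_, fun q => ⟨(Sum.inl q.1.1, Sum.inr q.1.2), q.2⟩, ?_, ?_⟩
  · obtain ⟨⟨x, y⟩, h⟩ := p
    cases x with
    | inl a => cases y with
      | inl a' => exact absurd h (by simp [orient])
      | inr b => exact ⟨(a, b), h⟩
    | inr b => cases y <;> exact absurd h (by simp [orient])
  · rintro ⟨⟨x, y⟩, h⟩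
    cases x with
    | inl a => cases y with
      | inl a' => exact absurd h (by simp [orient])
      | inr b => rfl
    | inr b => cases y <;> exact absurd h (by simp [orient])
  · rintro ⟨⟨a, b⟩, h⟩; rfl

/-- Tensor (categorical) product of two bipartite graphs. -/
def btensor {n m n' m' : ℕ} (F : Fin n → Fin m → Prop) (F' : Fin n' → Fin m' → Prop) :
    Fin (n * n') → Fin (m * m') → Prop :=
  fun u v => F (finProdFinEquiv.symm u).1 (finProdFinEquiv.symm v).1 ∧
             F' (finProdFinEquiv.symm u).2 (finProdFinEquiv.symm v).2

lemma card_btensor_hom {α₁ α₂ : Type} (E : α₁ → α₂ → Prop)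
    {n m n' m' : ℕ} (F : Fin n → Fin m → Prop) (F' : Fin n' → Fin m' → Prop) :
    Nat.card {fg : (α₁ → Fin (n * n')) × (α₂ → Fin (m * m')) //
        ∀ a b, E a b → btensor F F' (fg.1 a) (fg.2 b)}
      = Nat.card {fg : (α₁ → Fin n) × (α₂ → Fin m) // ∀ a b, E a b → F (fg.1 a) (fg.2 b)}
        * Nat.card {fg : (α₁ → Fin n') × (α₂ → Fin m') // ∀ a b, E a b → F' (fg.1 a) (fg.2 b)} := by
  rw [← Nat.card_prod]
  apply Nat.card_congr
  refine ⟨fun ⟨fg, h⟩ =>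
      (⟨(fun a => (finProdFinEquiv.symm (fg.1 a)).1, fun b => (finProdFinEquiv.symm (fg.2 b)).1),
        fun a b hab => (h a b hab).1⟩,
       ⟨(fun a => (finProdFinEquiv.symm (fg.1 a)).2, fun b => (finProdFinEquiv.symm (fg.2 b)).2),
        fun a b hab => (h a b hab).2⟩),
    fun ⟨⟨fg, h⟩, ⟨fg', h'⟩⟩ =>
      ⟨(fun a => finProdFinEquiv (fg.1 a, fg'.1 a), fun b => finProdFinEquiv (fg.2 b, fg'.2 b)),
       fun a b hab => by
        constructor <;> simp only [Equiv.symm_apply_apply] <;> [exact h a b hab; exact h' a b hab]⟩,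
    ?_, ?_⟩
  · rintro ⟨⟨f₁, f₂⟩, h⟩
    apply Subtype.ext
    simp only [Prod.mk.injEq]
    constructor <;> funext x <;> simp only [Prod.mk.eta, Equiv.apply_symm_apply]
  · rintro ⟨⟨⟨f₁, f₂⟩, h⟩, ⟨⟨g₁, g₂⟩, h'⟩⟩
    simp only [Prod.mk.injEq, Subtype.mk.injEq]
    refine ⟨⟨?_, ?_⟩, ?_, ?_⟩ <;> funext x <;> simp only [Equiv.symm_apply_apply]

lemma card_btensor_edge {n m n' m' : ℕ} (F : Fin n → Fin m → Prop) (F' : Fin n' → Fin m' → Prop) :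
    Nat.card {p : Fin (n * n') × Fin (m * m') // btensor F F' p.1 p.2}
      = Nat.card {p : Fin n × Fin m // F p.1 p.2} * Nat.card {p : Fin n' × Fin m' // F' p.1 p.2} := by
  rw [← Nat.card_prod]
  apply Nat.card_congr
  refine ⟨fun ⟨p, h⟩ =>
      (⟨((finProdFinEquiv.symm p.1).1, (finProdFinEquiv.symm p.2).1), h.1⟩,
       ⟨((finProdFinEquiv.symm p.1).2, (finProdFinEquiv.symm p.2).2), h.2⟩),
    fun ⟨⟨p, h⟩, ⟨q, h'⟩⟩ =>
      ⟨(finProdFinEquiv (p.1, q.1), finProdFinEquiv (p.2, q.2)), by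
        constructor <;> simp only [Equiv.symm_apply_apply] <;> [exact h; exact h']⟩,
    ?_, ?_⟩
  · rintro ⟨⟨u, v⟩, h⟩
    apply Subtype.ext
    simp only [Prod.mk.eta, Equiv.apply_symm_apply]
  · rintro ⟨⟨⟨i, j⟩, h⟩, ⟨⟨i', j'⟩, h'⟩⟩
    simp only [Prod.mk.injEq, Subtype.mk.injEq, Equiv.symm_apply_apply]

lemma bipHomDensity_btensor {α₁ α₂ : Type} [Fintype α₁] [Fintype α₂] (E : α₁ → α₂ → Prop)
    {n m n' m' : ℕ} (F : Fin n → Fin m → Prop) (F' : Fin n' → Fin m' → Prop) :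
    bipHomDensity E (btensor F F') = bipHomDensity E F * bipHomDensity E F' := by
  unfold bipHomDensity
  rw [card_btensor_hom]
  rw [div_mul_div_comm]
  push_cast
  congr 1
  ring

/-- Vertex set of the auxiliary oriented graph. -/
abbrev Vaux (n m : ℕ) : Type := Fin 2 × Fin n × Fin m

/-- The auxiliary oriented graph: a balanced blow-up of `F`, oriented left-to-right. -/
def Gaux {n m : ℕ} (F : Fin n → Fin m → Prop) : Vaux n m → Vaux n m → Prop :=
  fun u v => u.1 = 0 ∧ v.1 = 1 ∧ F u.2.1 v.2.2

lemma isOriented_Gaux {n m : ℕ} (F : Fin n → Fin m → Prop) : IsOriented (Gaux F) := by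
  constructor
  · rintro x ⟨h1, h2, -⟩
    rw [h1] at h2
    exact absurd h2 (by decide)
  · rintro x y ⟨-, h2, -⟩ ⟨h1', -, -⟩
    rw [h2] at h1'
    exact absurd h1' (by decide)

lemma card_Gaux_edge {n m : ℕ} (F : Fin n → Fin m → Prop) :
    Nat.card {p : Vaux n m × Vaux n m // Gaux F p.1 p.2}
      = m * (n * Nat.card {p : Fin n × Fin m // F p.1 p.2}) := by
  rw [show m * (n * Nat.card {p : Fin n × Fin m // F p.1 p.2})
      = Nat.card (Fin m × Fin n × {p : Fin n × Fin m // F p.1 p.2}) by simp]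
  apply Nat.card_congr
  refine ⟨fun ⟨p, h⟩ => (p.1.2.2, p.2.2.1, ⟨(p.1.2.1, p.2.2.2), h.2.2⟩),
    fun q => ⟨((0, q.2.2.1.1, q.1), (1, q.2.1, q.2.2.1.2)), ⟨rfl, rfl, q.2.2.2⟩⟩, ?_, ?_⟩
  · rintro ⟨⟨⟨s, i, j⟩, ⟨t, i', j'⟩⟩, ⟨hs, ht, h⟩⟩
    apply Subtype.ext
    dsimp at hs ht ⊢
    rw [hs, ht]
  · rintro ⟨j, i', ⟨⟨i, j'⟩, h⟩⟩; rfl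

lemma card_Gaux_hom_le {n m : ℕ} (F : Fin n → Fin m → Prop)
    {α₁ α₂ : Type} [Fintype α₁] [Fintype α₂] (E : α₁ → α₂ → Prop) :
    Nat.card {f : α₁ ⊕ α₂ → Vaux n m // ∀ x y, orient E x y → Gaux F (f x) (f y)}
      ≤ Nat.card {fg : (α₁ → Fin n) × (α₂ → Fin m) // ∀ a b, E a b → F (fg.1 a) (fg.2 b)}
        * ((2 * m) ^ Fintype.card α₁ * (2 * n) ^ Fintype.card α₂) := by
  classical
  have key := Nat.card_le_card_of_injective
    (α := {f : α₁ ⊕ α₂ → Vaux n m // ∀ x y, orient E x y → Gaux F (f x) (f y)})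
    (β := {fg : (α₁ → Fin n) × (α₂ → Fin m) // ∀ a b, E a b → F (fg.1 a) (fg.2 b)}
        × ((α₁ → Fin 2 × Fin m) × (α₂ → Fin 2 × Fin n)))
    (fun p =>
      (⟨(fun a => (p.1 (Sum.inl a)).2.1, fun b => (p.1 (Sum.inr b)).2.2),
         fun a b hab => (p.2 (Sum.inl a) (Sum.inr b) hab).2.2⟩,
       (fun a => ((p.1 (Sum.inl a)).1, (p.1 (Sum.inl a)).2.2),
        fun b => ((p.1 (Sum.inr b)).1, (p.1 (Sum.inr b)).2.1))))
    (by
      rintro ⟨f, hf⟩ ⟨g, hg⟩ h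
      simp only [Prod.mk.injEq, Subtype.mk.injEq] at h
      obtain ⟨⟨h1, h2⟩, h3, h4⟩ := h
      apply Subtype.ext
      funext x
      cases x with
      | inl a =>
        have e1 : (f (Sum.inl a)).2.1 = (g (Sum.inl a)).2.1 := congrFun h1 a
        have e3 := congrFun h3 a
        simp only [Prod.mk.injEq] at e3
        show f (Sum.inl a) = g (Sum.inl a)
        rw [Prod.ext_iff, Prod.ext_iff]
        exact ⟨e3.1, e1, e3.2⟩
      | inr b =>
        have e2 : (f (Sum.inr b)).2.2 = (g (Sum.inr b)).2.2 := congrFun h2 b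
        have e4 := congrFun h4 b
        simp only [Prod.mk.injEq] at e4
        show f (Sum.inr b) = g (Sum.inr b)
        rw [Prod.ext_iff, Prod.ext_iff]
        exact ⟨e4.1, e4.2, e2⟩)
  calc Nat.card {f : α₁ ⊕ α₂ → Vaux n m // ∀ x y, orient E x y → Gaux F (f x) (f y)}
      ≤ _ := key
    _ = _ := by
        rw [Nat.card_prod, Nat.card_prod, Nat.card_fun, Nat.card_fun]
        congr 2 <;> simp [Nat.card_eq_fintype_card]

lemma pow_limit_le {d t C : ℝ} (hd : 0 ≤ d) (hC : 0 < C)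
    (h : ∀ k : ℕ, C * t ^ k ≤ d ^ k) : t ≤ d := by
  by_contra hlt
  push_neg at hlt
  have ht0 : 0 < t := lt_of_le_of_lt hd hlt
  have hr1 : d / t < 1 := (div_lt_one ht0).mpr hlt
  have hr0 : 0 ≤ d / t := div_nonneg hd ht0.le
  have htend := tendsto_pow_atTop_nhds_zero_of_lt_one hr0 hr1
  obtain ⟨k, hk⟩ := (htend.eventually_lt_const hC).exists
  have h1 : d ^ k < C * t ^ k := by
    have := (div_lt_iff₀ (pow_pos ht0 k)).mp (by rw [← div_pow]; exact hk)
    linarith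
  exact absurd (h k) (not_le.mpr h1)

end Aux

lemma bip_weak_bound {α₁ α₂ : Type} [Fintype α₁] [Fintype α₂] {E : α₁ → α₂ → Prop}
    (hD : DirSidorenko (orient E)) {n m : ℕ} (hn : 0 < n) (hm : 0 < m)
    (F : Fin n → Fin m → Prop) :
    bipHomDensity E F ≥
      ((Nat.card {p : Fin n × Fin m // F p.1 p.2} : ℝ) / (4 * n * m)) ^ bipEdgeCount E := by
  classical
  set N : ℕ := Fintype.card (Vaux n m) with hN
  have hNval : N = 2 * (n * m) := by simp [hN]
  have hN0 : 0 < N := by rw [hNval]; positivity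
  let e : Vaux n m ≃ Fin N := Fintype.equivFin _
  let G : Fin N → Fin N → Prop := fun x y => Gaux F (e.symm x) (e.symm y)
  have hGor : IsOriented G :=
    ⟨fun x h => (isOriented_Gaux F).1 _ h, fun x y h h' => (isOriented_Gaux F).2 _ _ h h'⟩
  have key := hD N hN0 G hGor
  have hK2card : Nat.card {f : Fin 2 → Fin N // ∀ x y, K2dir x y → G (f x) (f y)}
      = m * (n * Nat.card {p : Fin n × Fin m // F p.1 p.2}) := by
    rw [card_K2hom, ← card_Gaux_edge F]
    apply Nat.card_congr
    exact Equiv.subtypeEquiv (Equiv.prodCongr e.symm e.symm) (fun p => Iff.rfl)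
  have hHomcard : Nat.card {f : α₁ ⊕ α₂ → Fin N // ∀ x y, orient E x y → G (f x) (f y)}
      = Nat.card {f : α₁ ⊕ α₂ → Vaux n m // ∀ x y, orient E x y → Gaux F (f x) (f y)} := by
    apply Nat.card_congr
    exact Equiv.subtypeEquiv (Equiv.arrowCongr (Equiv.refl _) e.symm) (fun f => Iff.rfl)
  have hHomle := (hHomcard ▸ card_Gaux_hom_le F E :
    Nat.card {f : α₁ ⊕ α₂ → Fin N // ∀ x y, orient E x y → G (f x) (f y)}
      ≤ Nat.card {fg : (α₁ → Fin n) × (α₂ → Fin m) // ∀ a b, E a b → F (fg.1 a) (fg.2 b)}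
        * ((2 * m) ^ Fintype.card α₁ * (2 * n) ^ Fintype.card α₂))
  set a₁ : ℕ := Fintype.card α₁
  set a₂ : ℕ := Fintype.card α₂
  set x : ℕ := Nat.card {fg : (α₁ → Fin n) × (α₂ → Fin m) // ∀ a b, E a b → F (fg.1 a) (fg.2 b)}
  set c : ℕ := Nat.card {p : Fin n × Fin m // F p.1 p.2}
  set eB : ℕ := bipEdgeCount E
  unfold homDensity at key
  rw [edgeCount, edgeCount_orient_eq, hK2card] at key
  rw [Fintype.card_sum, Fintype.card_fin, Fintype.card_fin] at key
  have hNR : (N : ℝ) = 2 * (n * m) := by rw [hNval]; push_cast; ring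
  have hnR : (0:ℝ) < n := by exact_mod_cast hn
  have hmR : (0:ℝ) < m := by exact_mod_cast hm
  have hgoal : bipHomDensity E F = (x : ℝ) / ((n:ℝ) ^ a₁ * (m:ℝ) ^ a₂) := rfl
  rw [hgoal]
  have step1 : ((Nat.card {f : α₁ ⊕ α₂ → Fin N // ∀ x y, orient E x y → G (f x) (f y)} : ℕ) : ℝ)
      ≤ (x : ℝ) * ((2 * m) ^ a₁ * (2 * n) ^ a₂) := by
    calc ((Nat.card {f : α₁ ⊕ α₂ → Fin N // ∀ x y, orient E x y → G (f x) (f y)} : ℕ) : ℝ)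
        ≤ ((x * ((2 * m) ^ a₁ * (2 * n) ^ a₂) : ℕ) : ℝ) := by exact_mod_cast hHomle
      _ = (x : ℝ) * ((2 * m) ^ a₁ * (2 * n) ^ a₂) := by push_cast; ring
  have hNpow : (0:ℝ) < (N:ℝ) ^ (a₁ + a₂) := by positivity
  have step2 : ((m * (n * c) : ℕ) : ℝ) / (N:ℝ) ^ 2 = (c : ℝ) / (4 * n * m) := by
    rw [hNR]; push_cast; field_simp; ring
  have step3 : (x : ℝ) * ((2 * m) ^ a₁ * (2 * n) ^ a₂) / (N:ℝ) ^ (a₁ + a₂)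
      = (x : ℝ) / ((n:ℝ) ^ a₁ * (m:ℝ) ^ a₂) := by
    rw [hNR]
    have hexp : ((2:ℝ) * ((n:ℝ) * (m:ℝ))) ^ (a₁ + a₂)
        = ((2 * (m:ℝ)) ^ a₁ * (2 * (n:ℝ)) ^ a₂) * ((n:ℝ) ^ a₁ * (m:ℝ) ^ a₂) := by
      rw [pow_add]; ring
    rw [hexp]
    have h1 : ((2 * (m:ℝ)) ^ a₁ * (2 * (n:ℝ)) ^ a₂) ≠ 0 := by positivity
    have h2 : ((n:ℝ) ^ a₁ * (m:ℝ) ^ a₂) ≠ 0 := by positivity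
    field_simp
  calc ((c : ℝ) / (4 * (n:ℝ) * (m:ℝ))) ^ eB
      = (((m * (n * c) : ℕ) : ℝ) / (N:ℝ) ^ 2) ^ eB := by rw [step2]
    _ ≤ ((Nat.card {f : α₁ ⊕ α₂ → Fin N // ∀ x y, orient E x y → G (f x) (f y)} : ℕ) : ℝ)
          / (N:ℝ) ^ (a₁ + a₂) := key
    _ ≤ (x : ℝ) * ((2 * m) ^ a₁ * (2 * n) ^ a₂) / (N:ℝ) ^ (a₁ + a₂) := by
        gcongr
    _ = (x : ℝ) / ((n:ℝ) ^ a₁ * (m:ℝ) ^ a₂) := step3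

/-- Let `B` be an oriented graph admitting a homomorphism to `K2→`,
i.e. (up to isomorphism) the orientation from part `α₁` to part `α₂` of a bipartite
graph `B̄` with edge relation `E`. Then `B̄` has the asymmetric Sidorenko property if
and only if `B` has the directed Sidorenko property. -/
theorem asymSidorenko_iff_dirSidorenko
    {α₁ α₂ : Type} [Fintype α₁] [Fintype α₂] (E : α₁ → α₂ → Prop) :
    AsymSidorenko E ↔ DirSidorenko (orient E) := by
  constructor
  · intro hA N hN0 G _
    have hnum : homDensity (orient E) G = bipHomDensity E G := by
      unfold homDensity bipHomDensity
      rw [card_hom_orient, Fintype.card_sum, Fintype.card_fin, pow_add]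
    have hK2 : homDensity K2dir G
        = (Nat.card {p : Fin N × Fin N // G p.1 p.2} : ℝ) / ((N:ℝ) * N) := by
      unfold homDensity
      rw [card_K2hom, Fintype.card_fin]
      norm_num [sq]
    have hedge : edgeCount (orient E) = bipEdgeCount E := by
      unfold edgeCount bipEdgeCount
      exact edgeCount_orient_eq E
    rw [ge_iff_le, hnum, hK2, hedge]
    exact hA N N hN0 hN0 G
  · intro hD n m hn hm F
    have hnR : (0:ℝ) < n := by exact_mod_cast hn
    have hmR : (0:ℝ) < m := by exact_mod_cast hm
    set eB : ℕ := bipEdgeCount E with heB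
    set d : ℝ := bipHomDensity E F with hd
    set r : ℝ := (Nat.card {p : Fin n × Fin m // F p.1 p.2} : ℝ) / ((n:ℝ) * m) with hr
    have hd0 : 0 ≤ d := by
      rw [hd]; unfold bipHomDensity; positivity
    have hr0 : 0 ≤ r := by rw [hr]; positivity
    have powers : ∀ k : ℕ, ∃ (nk mk : ℕ) (Fk : Fin nk → Fin mk → Prop),
        0 < nk ∧ 0 < mk ∧ bipHomDensity E Fk = d ^ k ∧
        (Nat.card {p : Fin nk × Fin mk // Fk p.1 p.2} : ℝ) = r ^ k * ((nk:ℝ) * mk) := by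
      intro k
      induction k with
      | zero =>
        refine ⟨1, 1, fun _ _ => True, one_pos, one_pos, ?_, ?_⟩
        · unfold bipHomDensity
          rw [show Nat.card {fg : (α₁ → Fin 1) × (α₂ → Fin 1) //
                ∀ a b, E a b → True} = 1 from ?_]
          · norm_num
          · rw [Nat.card_congr (Equiv.subtypeUnivEquiv fun _ => fun _ _ _ => trivial)]
            simp [Nat.card_prod, Nat.card_fun]
        · rw [Nat.card_congr (Equiv.subtypeUnivEquiv fun _ => trivial)]
          simp
      | succ k ih =>
        obtain ⟨nk, mk, Fk, h1, h2, h3, h4⟩ := ih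
        refine ⟨n * nk, m * mk, btensor F Fk, by positivity, by positivity, ?_, ?_⟩
        · rw [bipHomDensity_btensor, h3, pow_succ]; ring
        · rw [card_btensor_edge]
          push_cast [h4]
          have hc : (Nat.card {p : Fin n × Fin m // F p.1 p.2} : ℝ) = r * ((n:ℝ) * m) := by
            rw [hr]; field_simp
          rw [hc, pow_succ]
          ring
    have main : ∀ k : ℕ, ((1:ℝ)/4) ^ eB * (r ^ eB) ^ k ≤ d ^ k := by
      intro k
      obtain ⟨nk, mk, Fk, h1, h2, h3, h4⟩ := powers k
      have hb := bip_weak_bound hD h1 h2 Fk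
      rw [h3] at hb
      have hnkR : (0:ℝ) < nk := by exact_mod_cast h1
      have hmkR : (0:ℝ) < mk := by exact_mod_cast h2
      have hrw : ((Nat.card {p : Fin nk × Fin mk // Fk p.1 p.2} : ℝ) / (4 * nk * mk))
          = r ^ k / 4 := by
        rw [h4]; field_simp
      rw [hrw] at hb
      calc ((1:ℝ)/4) ^ eB * (r ^ eB) ^ k = (r ^ k / 4) ^ eB := by ring
        _ ≤ d ^ k := hb
    have final : r ^ eB ≤ d :=
      pow_limit_le hd0 (by positivity) main
    exact final
end

section
/- If an oriented graph B has the directed Sidorenko property, then there exists a homomorphism from B to K2→ (the oriented graph with two vertices and a single directed edge). -/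
open MeasureTheory Filter Topology

theorem isOriented_K2dir : IsOriented K2dir := by
  refine ⟨fun x ⟨hx0, hx1⟩ => ?_, fun x y ⟨_, hy1⟩ ⟨hy0, _⟩ => ?_⟩
  · exact absurd (hx0.symm.trans hx1) (by decide)
  · exact absurd (hy1.symm.trans hy0) (by decide)

theorem homDensity_pos_iff {α β : Type} [Fintype α] [Fintype β] [Nonempty β]
    (A : α → α → Prop) (G : β → β → Prop) :
    0 < homDensity A G ↔ ∃ f : α → β, ∀ x y, A x y → G (f x) (f y) := by
  rw [homDensity, div_pos_iff_of_pos_right (by positivity), Nat.cast_pos, Nat.card_pos_iff,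
    nonempty_subtype]
  exact and_iff_left inferInstance

theorem dirSidorenko_implies_hom_to_K2_general
    {β : Type} [Fintype β] (B : β → β → Prop)
    (h : DirSidorenko B) :
    ∃ f : β → Fin 2, ∀ x y, B x y → K2dir (f x) (f y) := by
  have hK2 : 0 < homDensity K2dir K2dir := (homDensity_pos_iff _ _).2 ⟨id, fun _ _ => id⟩
  -- Test the Sidorenko inequality against `G = K2→` itself.
  have hIneq : homDensity K2dir K2dir ^ edgeCount B ≤ homDensity B K2dir :=
    h 2 two_pos K2dir isOriented_K2dir
  exact (homDensity_pos_iff B K2dir).1 ((pow_pos hK2 _).trans_le hIneq)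

/-- If an oriented graph `B` has the directed Sidorenko property,
then there is a homomorphism `B → K2→`. -/
theorem dirSidorenko_implies_hom_to_K2
    {β : Type} [Fintype β] (B : β → β → Prop) (hB : IsOriented B)
    (h : DirSidorenko B) :
    ∃ f : β → Fin 2, ∀ x y, B x y → K2dir (f x) (f y) :=
  dirSidorenko_implies_hom_to_K2_general B h
end

section
/- If an oriented graph B has the directed forcing property, then there exists a homomorphism from B to K2→ (the oriented graph with two vertices and a single directed edge). -/
open MeasureTheory Filter Topology

open Classical in
/-- Step graphon associated to a directed graph on `Fin n`: value `1` on `I_i × I_j`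
for edges `(i,j)` (with `I_1, …, I_n` consecutive intervals of length `1/n`), else `0`. -/
noncomputable def stepGraphon {n : ℕ} (G : Fin n → Fin n → Prop) : ℝ → ℝ → ℝ :=
  fun x y => if ∃ i j : Fin n, G i j ∧
      x ∈ Set.Ico (((i : ℕ) : ℝ)/n) ((((i : ℕ) : ℝ) + 1)/n) ∧
      y ∈ Set.Ico (((j : ℕ) : ℝ)/n) ((((j : ℕ) : ℝ) + 1)/n) then 1 else 0

/-- Cut norm: supremum over measurable subsets `S, T ⊆ [0,1]` of `|∫_{S×T} U|`. -/
noncomputable def cutNorm (U : ℝ → ℝ → ℝ) : ℝ :=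
  ⨆ ST : {S : Set ℝ // MeasurableSet S ∧ S ⊆ Set.Icc 0 1} ×
         {T : Set ℝ // MeasurableSet T ∧ T ⊆ Set.Icc 0 1},
    |∫ z in (ST.1.1 ×ˢ ST.2.1), U z.1 z.2|

/-- The directed forcing property: for every `p ∈ [0, 1/2]` and every sequence of
(nonempty) oriented graphs `G_k` with `t(K2→, G_k) → p` and `t(B, G_k) → p^{e(B)}`,
the cut norm `‖W_{G_k} − p‖□` tends to `0`. -/
def DirForcing {β : Type} [Fintype β] (B : β → β → Prop) : Prop :=
  ∀ p : ℝ, p ∈ Set.Icc (0:ℝ) (1/2) →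
  ∀ (V : ℕ → ℕ) (G : ∀ k, Fin (V k) → Fin (V k) → Prop),
    (∀ k, 0 < V k) → (∀ k, IsOriented (G k)) →
    Tendsto (fun k => homDensity K2dir (G k)) atTop (𝓝 p) →
    Tendsto (fun k => homDensity B (G k)) atTop (𝓝 (p ^ edgeCount B)) →
    Tendsto (fun k => cutNorm (fun x y => stepGraphon (G k) x y - p)) atTop (𝓝 0)

set_option linter.unusedSectionVars false
set_option linter.unusedVariables false

namespace DFP
open Finset

variable {β : Type} [Fintype β]

open Classical in
/-- The edge set of `B` as a finset. -/
noncomputable def ED (B : β → β → Prop) : Finset (β × β) :=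
  Finset.univ.filter fun p => B p.1 p.2

/-- Number of edges. -/
noncomputable def eB (B : β → β → Prop) : ℕ := (ED B).card

open Classical in
/-- Non-isolated vertices. -/
noncomputable def SI (B : β → β → Prop) : Finset β :=
  Finset.univ.filter fun x => (∃ y, B x y) ∨ (∃ y, B y x)

/-- Number of non-isolated vertices. -/
noncomputable def vI (B : β → β → Prop) : ℕ := (SI B).card

/-- Number of vertices of the host graphs per unit. -/
noncomputable def DD (B : β → β → Prop) : ℕ :=
  8 * Fintype.card β * eB B ^ eB B

/-- Half the number of vertices. -/
noncomputable def NN (B : β → β → Prop) (m : ℕ) : ℕ :=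
  4 * Fintype.card β * eB B ^ eB B * m

/-- Total number of arcs. -/
noncomputable def m0 (B : β → β → Prop) (m : ℕ) : ℕ := eB B * (m * m)

open Classical in
/-- A fixed numbering of the vertices of `β`. -/
noncomputable def nu (x : β) : ℕ := List.idxOf x (Finset.univ : Finset β).toList

open Classical in
/-- A fixed enumeration of the edges of `B`. -/
noncomputable def edgeOf (B : β → β → Prop) [Nonempty β] (i : ℕ) : β × β :=
  (ED B).toList.getD i (Classical.arbitrary _)

/-- The `t`-th arc of the blow-up graph (as a pair of natural numbers). -/
noncomputable def pPair (B : β → β → Prop) [Nonempty β] (m t : ℕ) : ℕ × ℕ :=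
  (nu (edgeOf B (t / (m*m))).1 * m + t % (m*m) / m,
   nu (edgeOf B (t / (m*m))).2 * m + t % m)

/-- The `t`-th arc of the bipartite graph (as a pair of natural numbers). -/
noncomputable def mPair (B : β → β → Prop) (m t : ℕ) : ℕ × ℕ :=
  (t % NN B m, NN B m + t / NN B m)

/-- The interpolating graph sequence: the first `k` arcs of the blow-up together
with the arcs `k, …, m0-1` of the bipartite graph. -/
noncomputable def Gr (B : β → β → Prop) [Nonempty β] (m k : ℕ) :
    Fin (DD B * m) → Fin (DD B * m) → Prop := fun i j =>
  (∃ t, t < k ∧ pPair B m t = ((i : ℕ), (j : ℕ))) ∨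
  (∃ t, k ≤ t ∧ t < m0 B m ∧ mPair B m t = ((i : ℕ), (j : ℕ)))

lemma mem_ED {B : β → β → Prop} {p : β × β} : p ∈ ED B ↔ B p.1 p.2 := by
  simp [ED]

open Classical in
lemma nu_lt (x : β) : nu x < Fintype.card β := by
  rw [nu, ← Finset.card_univ, ← Finset.length_toList]
  exact List.idxOf_lt_length_iff.2 (by simp [Finset.mem_toList])

open Classical in
lemma nu_inj {x y : β} (h : nu x = nu y) : x = y := by
  have hx : (Finset.univ : Finset β).toList.idxOf x < (Finset.univ : Finset β).toList.length :=
    List.idxOf_lt_length_iff.2 (by simp [Finset.mem_toList])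
  have hy : (Finset.univ : Finset β).toList.idxOf y < (Finset.univ : Finset β).toList.length :=
    List.idxOf_lt_length_iff.2 (by simp [Finset.mem_toList])
  have h1 := List.getElem_idxOf hx
  have h2 := List.getElem_idxOf hy
  rw [nu, nu] at h
  rw [← h1, ← h2]
  congr 1

lemma euclid {m a b r s : ℕ} (hm : 0 < m) (hr : r < m) (hs : s < m)
    (h : a * m + r = b * m + s) : a = b ∧ r = s := by
  have d : ∀ c u : ℕ, u < m → (c * m + u) / m = c := by
    intro c u hu
    rw [show c * m + u = u + m * c by ring, Nat.add_mul_div_left _ _ hm,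
      Nat.div_eq_of_lt hu, Nat.zero_add]
  have e1 : a = b := by rw [← d a r hr, ← d b s hs, h]
  refine ⟨e1, ?_⟩
  subst e1
  omega

lemma edgeOf_mem (B : β → β → Prop) [Nonempty β] {i : ℕ} (hi : i < eB B) :
    edgeOf B i ∈ ED B := by
  have hl : i < (ED B).toList.length := by rwa [Finset.length_toList]
  rw [edgeOf, List.getD_eq_getElem _ _ hl]
  exact Finset.mem_toList.1 (List.getElem_mem hl)

lemma edgeOf_inj (B : β → β → Prop) [Nonempty β] {i j : ℕ}
    (hi : i < eB B) (hj : j < eB B) (h : edgeOf B i = edgeOf B j) : i = j := by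
  have hli : i < (ED B).toList.length := by rwa [Finset.length_toList]
  have hlj : j < (ED B).toList.length := by rwa [Finset.length_toList]
  rw [edgeOf, edgeOf, List.getD_eq_getElem _ _ hli, List.getD_eq_getElem _ _ hlj] at h
  exact ((ED B).nodup_toList.getElem_inj_iff).1 h

lemma edgeOf_index (B : β → β → Prop) [Nonempty β] {p : β × β} (hp : p ∈ ED B) :
    ∃ i, i < eB B ∧ edgeOf B i = p := by
  haveI := Classical.decEq (β × β)
  have hmem : p ∈ (ED B).toList := Finset.mem_toList.2 hp
  have hl : (ED B).toList.idxOf p < (ED B).toList.length :=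
    List.idxOf_lt_length_iff.2 hmem
  refine ⟨(ED B).toList.idxOf p, by rwa [Finset.length_toList] at hl, ?_⟩
  rw [edgeOf, List.getD_eq_getElem _ _ hl]
  exact List.getElem_idxOf hl

lemma pPair_decomp (B : β → β → Prop) [Nonempty β] {m : ℕ} (hm : 0 < m) (t : ℕ) :
    ∃ A r s, r < m ∧ s < m ∧ t = A * (m*m) + (r*m+s) ∧ A = t / (m*m) ∧
      pPair B m t = (nu (edgeOf B A).1 * m + r, nu (edgeOf B A).2 * m + s) := by
  refine ⟨t / (m*m), t % (m*m) / m, t % m, ?_, Nat.mod_lt _ hm, ?_, rfl, rfl⟩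
  · exact (Nat.div_lt_iff_lt_mul hm).2 (Nat.mod_lt _ (Nat.mul_pos hm hm))
  · have h3 : t % (m*m) % m = t % m := Nat.mod_mod_of_dvd t ⟨m, rfl⟩
    calc t = (m*m) * (t/(m*m)) + t % (m*m) := (Nat.div_add_mod t (m*m)).symm
    _ = (m*m) * (t/(m*m)) + (m * (t % (m*m) / m) + t % (m*m) % m) := by
        congr 1
        exact (Nat.div_add_mod (t % (m*m)) m).symm
    _ = t / (m*m) * (m*m) + (t % (m*m) / m * m + t % m) := by rw [h3]; ring

lemma pPair_eq (B : β → β → Prop) [Nonempty β] {m : ℕ} (hm : 0 < m)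
    (A r s : ℕ) (hr : r < m) (hs : s < m) :
    pPair B m (A * (m*m) + (r * m + s)) =
      (nu (edgeOf B A).1 * m + r, nu (edgeOf B A).2 * m + s) := by
  have hm2 : 0 < m*m := Nat.mul_pos hm hm
  have hrs : r * m + s < m * m := by
    calc r*m + s < r*m + m := by omega
    _ = (r+1)*m := by ring
    _ ≤ m*m := Nat.mul_le_mul_right _ (by omega)
  have h1 : (A * (m*m) + (r*m+s)) / (m*m) = A := by
    rw [show A * (m*m) + (r*m+s) = (r*m+s) + (m*m) * A by ring,
      Nat.add_mul_div_left _ _ hm2, Nat.div_eq_of_lt hrs, Nat.zero_add]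
  have h2 : (A * (m*m) + (r*m+s)) % (m*m) = r*m+s := by
    rw [show A * (m*m) + (r*m+s) = (m*m) * A + (r*m+s) by ring, Nat.mul_add_mod,
      Nat.mod_eq_of_lt hrs]
  have h3 : (A * (m*m) + (r*m+s)) % m = s := by
    have hd : (A * (m*m) + (r*m+s)) % (m*m) % m = (A * (m*m) + (r*m+s)) % m :=
      Nat.mod_mod_of_dvd _ ⟨m, rfl⟩
    rw [← hd, h2, show r*m+s = s + r*m by ring, Nat.add_mul_mod_self_right,
      Nat.mod_eq_of_lt hs]
  have h4 : (A * (m*m) + (r*m+s)) % (m*m) / m = r := by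
    rw [h2, show r*m+s = s + m*r by ring, Nat.add_mul_div_left _ _ hm,
      Nat.div_eq_of_lt hs, Nat.zero_add]
  rw [pPair, h1, h3, h4]

section Main

variable [Nonempty β]

lemma NN_pos {B : β → β → Prop} {m : ℕ} (hv : 0 < Fintype.card β) (he : 0 < eB B)
    (hm : 0 < m) : 0 < NN B m :=
  Nat.mul_pos (Nat.mul_pos (Nat.mul_pos (by norm_num) hv) (pow_pos he _)) hm

lemma two_NN (B : β → β → Prop) (m : ℕ) : DD B * m = 2 * NN B m := by
  rw [DD, NN]; ring

lemma vm_le_NN (B : β → β → Prop) (m : ℕ) : Fintype.card β * m ≤ NN B m := by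
  have h1 : 0 < eB B ^ eB B := by
    rcases Nat.eq_zero_or_pos (eB B) with h | h
    · simp [h]
    · exact pow_pos h _
  have h2 : Fintype.card β * m * 1 ≤ Fintype.card β * m * (4 * eB B ^ eB B) :=
    Nat.mul_le_mul_left _ (by omega)
  calc Fintype.card β * m = Fintype.card β * m * 1 := by ring
  _ ≤ Fintype.card β * m * (4 * eB B ^ eB B) := h2
  _ = NN B m := by rw [NN]; ring

lemma m0_le_NN2 {B : β → β → Prop} {m : ℕ} (hv : 0 < Fintype.card β) :
    m0 B m ≤ NN B m * NN B m := by
  rw [m0]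
  rcases Nat.eq_zero_or_pos (eB B) with h | h
  · simp [h]
  have h1 : eB B ≤ eB B ^ eB B := Nat.le_self_pow h.ne' _
  have h3 : (1:ℕ) ≤ 16 * (Fintype.card β * Fintype.card β) * eB B ^ eB B :=
    Nat.mul_pos (Nat.mul_pos (by norm_num) (Nat.mul_pos hv hv)) (pow_pos h _)
  calc eB B * (m*m) ≤ eB B ^ eB B * (m*m) := Nat.mul_le_mul_right _ h1
  _ = 1 * eB B ^ eB B * (m*m) := by ring
  _ ≤ (16 * (Fintype.card β * Fintype.card β) * eB B ^ eB B) * eB B ^ eB B * (m*m) :=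
      Nat.mul_le_mul_right _ (Nat.mul_le_mul_right _ h3)
  _ = NN B m * NN B m := by rw [NN]; ring

lemma pos_lt_vm {m : ℕ} {x : β} {r : ℕ} (hr : r < m) :
    nu x * m + r < Fintype.card β * m := by
  have h1 : nu x + 1 ≤ Fintype.card β := nu_lt x
  calc nu x * m + r < nu x * m + m := by omega
  _ = (nu x + 1) * m := by ring
  _ ≤ Fintype.card β * m := Nat.mul_le_mul_right _ h1

lemma gr_spec {B : β → β → Prop} {m k : ℕ} (hm : 0 < m) (hk : k ≤ m0 B m)
    (hv : 0 < Fintype.card β) (he : 0 < eB B)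
    {i j : Fin (DD B * m)} (h : Gr B m k i j) :
    (∃ x y r s, (x,y) ∈ ED B ∧ r < m ∧ s < m ∧
      (i:ℕ) = nu x * m + r ∧ (j:ℕ) = nu y * m + s)
    ∨ ((i:ℕ) < NN B m ∧ NN B m ≤ (j:ℕ)) := by
  rcases h with ⟨t, ht, hpe⟩ | ⟨t, -, ht2, hme⟩
  · left
    obtain ⟨A, r, s, hr, hs, -, hA, hpp⟩ := pPair_decomp B hm t
    have hAe : A < eB B := by
      rw [hA]
      exact (Nat.div_lt_iff_lt_mul (Nat.mul_pos hm hm)).2 (lt_of_lt_of_le ht hk)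
    rw [hpp, Prod.mk.injEq] at hpe
    refine ⟨(edgeOf B A).1, (edgeOf B A).2, r, s, ?_, hr, hs, ?_, ?_⟩
    · have := edgeOf_mem B hAe
      simpa using this
    · exact hpe.1.symm
    · exact hpe.2.symm
  · right
    rw [mPair, Prod.mk.injEq] at hme
    obtain ⟨h1, h2⟩ := hme
    constructor
    · rw [← h1]; exact Nat.mod_lt _ (NN_pos hv he hm)
    · rw [← h2]; exact Nat.le_add_right _ _

lemma gr_top {B : β → β → Prop} {m : ℕ} (hm : 0 < m)
    {x y : β} (hxy : B x y) {gx gy : ℕ} (hgx : gx < m) (hgy : gy < m)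
    {i j : Fin (DD B * m)} (hi : (i:ℕ) = nu x * m + gx) (hj : (j:ℕ) = nu y * m + gy) :
    Gr B m (m0 B m) i j := by
  obtain ⟨A, hA, hAe⟩ := edgeOf_index B (mem_ED.2 hxy : ((x,y) : β × β) ∈ ED B)
  refine Or.inl ⟨A * (m*m) + (gx * m + gy), ?_, ?_⟩
  · have hlt : gx*m + gy < m*m := by
      calc gx*m + gy < gx*m + m := by omega
      _ = (gx+1)*m := by ring
      _ ≤ m*m := Nat.mul_le_mul_right _ (by omega)
    calc A * (m*m) + (gx*m+gy) < A*(m*m) + m*m := by omega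
    _ = (A+1)*(m*m) := by ring
    _ ≤ eB B * (m*m) := Nat.mul_le_mul_right _ (by omega)
  · rw [pPair_eq B hm A gx gy hgx hgy, hAe, hi, hj]

lemma gr_oriented {B : β → β → Prop} (hB : IsOriented B) {m k : ℕ}
    (hm : 0 < m) (hk : k ≤ m0 B m) (hv : 0 < Fintype.card β) (he : 0 < eB B) :
    IsOriented (Gr B m k) := by
  constructor
  · intro i hii
    rcases gr_spec hm hk hv he hii with ⟨x, y, r, s, hxy, hr, hs, h1, h2⟩ | ⟨h1, h2⟩
    · have hxyB : B x y := mem_ED.1 hxy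
      have hxny : x ≠ y := fun hxy' => hB.1 y (hxy' ▸ hxyB)
      have := euclid hm hr hs (h1.symm.trans h2)
      exact hxny (nu_inj this.1)
    · omega
  · intro i j hij hji
    rcases gr_spec hm hk hv he hij with ⟨x, y, r, s, hxy, hr, hs, h1, h2⟩ | ⟨h1, h2⟩
    · rcases gr_spec hm hk hv he hji with ⟨x', y', r', s', hxy', hr', hs', h1', h2'⟩ | ⟨h1', h2'⟩
      · have e1 := euclid hm hs hr' (h2.symm.trans h1')
        have e2 := euclid hm hr hs' (h1.symm.trans h2')
        have hyx' : y = x' := nu_inj e1.1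
        have hxy'' : x = y' := nu_inj e2.1
        have hBxy : B x y := mem_ED.1 hxy
        have hBx'y' : B x' y' := mem_ED.1 hxy'
        rw [← hyx', ← hxy''] at hBx'y'
        exact hB.2 x y hBxy hBx'y'
      · have : (i:ℕ) < NN B m := lt_of_lt_of_le (h1 ▸ pos_lt_vm hr) (vm_le_NN B m)
        omega
    · rcases gr_spec hm hk hv he hji with ⟨x', y', r', s', hxy', hr', hs', h1', h2'⟩ | ⟨h1', h2'⟩
      · have : (j:ℕ) < NN B m := lt_of_lt_of_le (h1' ▸ pos_lt_vm hr') (vm_le_NN B m)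
        omega
      · omega

lemma pPair_inj {B : β → β → Prop} {m : ℕ} (hm : 0 < m) {t t' : ℕ}
    (ht : t < m0 B m) (ht' : t' < m0 B m)
    (h : pPair B m t = pPair B m t') : t = t' := by
  obtain ⟨A, r, s, hr, hs, hteq, hA, hpp⟩ := pPair_decomp B hm t
  obtain ⟨A', r', s', hr', hs', hteq', hA', hpp'⟩ := pPair_decomp B hm t'
  rw [hpp, hpp', Prod.mk.injEq] at h
  have e1 := euclid hm hr hr' h.1
  have e2 := euclid hm hs hs' h.2
  have hAe : A < eB B := by
    rw [hA]; exact (Nat.div_lt_iff_lt_mul (Nat.mul_pos hm hm)).2 ht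
  have hAe' : A' < eB B := by
    rw [hA']; exact (Nat.div_lt_iff_lt_mul (Nat.mul_pos hm hm)).2 ht'
  have hAA : A = A' :=
    edgeOf_inj B hAe hAe' (Prod.ext_iff.2 ⟨nu_inj e1.1, nu_inj e2.1⟩)
  rw [hteq, hteq', hAA, e1.2, e2.2]

lemma mPair_inj {B : β → β → Prop} {m : ℕ} (hnn : 0 < NN B m) {t t' : ℕ}
    (h : mPair B m t = mPair B m t') : t = t' := by
  rw [mPair, mPair, Prod.mk.injEq] at h
  obtain ⟨h1, h2⟩ := h
  have hd : t / NN B m = t' / NN B m := by omega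
  calc t = NN B m * (t / NN B m) + t % NN B m := (Nat.div_add_mod _ _).symm
  _ = NN B m * (t' / NN B m) + t' % NN B m := by rw [hd, h1]
  _ = t' := Nat.div_add_mod _ _

lemma pPair_snd_lt {B : β → β → Prop} {m : ℕ} (hm : 0 < m) (t : ℕ) :
    (pPair B m t).1 < NN B m ∧ (pPair B m t).2 < NN B m := by
  obtain ⟨A, r, s, hr, hs, -, -, hpp⟩ := pPair_decomp B hm t
  rw [hpp]
  exact ⟨lt_of_lt_of_le (pos_lt_vm hr) (vm_le_NN B m),
         lt_of_lt_of_le (pos_lt_vm hs) (vm_le_NN B m)⟩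

lemma mPair_bounds {B : β → β → Prop} {m : ℕ} (hv : 0 < Fintype.card β)
    (he : 0 < eB B) (hm : 0 < m) {t : ℕ} (ht : t < m0 B m) :
    (mPair B m t).1 < NN B m ∧ NN B m ≤ (mPair B m t).2 ∧
      (mPair B m t).2 < 2 * NN B m := by
  have hnn : 0 < NN B m := NN_pos hv he hm
  have hdiv : t / NN B m < NN B m := by
    rw [Nat.div_lt_iff_lt_mul hnn]
    exact lt_of_lt_of_le ht (m0_le_NN2 hv)
  refine ⟨Nat.mod_lt _ hnn, by simp [mPair], ?_⟩
  simp only [mPair]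
  omega

lemma card_arcs {B : β → β → Prop} {m k : ℕ} (hm : 0 < m) (hk : k ≤ m0 B m)
    (hv : 0 < Fintype.card β) (he : 0 < eB B) :
    Nat.card {q : Fin (DD B * m) × Fin (DD B * m) // Gr B m k q.1 q.2} = m0 B m := by
  have hnn : 0 < NN B m := NN_pos hv he hm
  have h2n : DD B * m = 2 * NN B m := two_NN B m
  have hple : ∀ t : ℕ, (pPair B m t).1 < DD B * m ∧ (pPair B m t).2 < DD B * m := by
    intro t
    obtain ⟨hp1, hp2⟩ := pPair_snd_lt (B := B) hm t
    omega
  have hmle : ∀ t : ℕ, t < m0 B m →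
      (mPair B m t).1 < DD B * m ∧ (mPair B m t).2 < DD B * m := by
    intro t ht
    obtain ⟨hm1, hm2, hm3⟩ := mPair_bounds hv he hm ht
    omega
  have key : Nat.card (Fin (m0 B m)) =
      Nat.card {q : Fin (DD B * m) × Fin (DD B * m) // Gr B m k q.1 q.2} := by
    apply Nat.card_eq_of_bijective
      (f := fun (t : Fin (m0 B m)) => if h : (t : ℕ) < k then
        ⟨(⟨(pPair B m (t:ℕ)).1, (hple (t:ℕ)).1⟩, ⟨(pPair B m (t:ℕ)).2, (hple (t:ℕ)).2⟩),
          Or.inl ⟨(t:ℕ), h, rfl⟩⟩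
      else
        ⟨(⟨(mPair B m (t:ℕ)).1, (hmle (t:ℕ) t.2).1⟩, ⟨(mPair B m (t:ℕ)).2, (hmle (t:ℕ) t.2).2⟩),
          Or.inr ⟨(t:ℕ), not_lt.1 h, t.2, rfl⟩⟩)
    constructor
    · intro t t' heq
      have hval := congrArg (fun z => (((z.1.1 : Fin (DD B * m)) : ℕ), ((z.1.2 : Fin (DD B * m)) : ℕ))) heq
      dsimp only at hval
      by_cases h1 : (t:ℕ) < k <;> by_cases h2 : (t':ℕ) < k
      · rw [dif_pos h1, dif_pos h2] at hval
        simp only [Prod.mk.injEq] at hval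
        exact Fin.ext (pPair_inj hm (lt_of_lt_of_le h1 hk) (lt_of_lt_of_le h2 hk)
          (Prod.ext_iff.2 ⟨hval.1, hval.2⟩))
      · rw [dif_pos h1, dif_neg h2] at hval
        simp only [Prod.mk.injEq] at hval
        have ha := (pPair_snd_lt (B := B) hm (t:ℕ)).2
        have hb := (mPair_bounds hv he hm (t'.2)).2.1
        omega
      · rw [dif_neg h1, dif_pos h2] at hval
        simp only [Prod.mk.injEq] at hval
        have ha := (pPair_snd_lt (B := B) hm (t':ℕ)).2
        have hb := (mPair_bounds hv he hm (t.2)).2.1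
        omega
      · rw [dif_neg h1, dif_neg h2] at hval
        simp only [Prod.mk.injEq] at hval
        exact Fin.ext (mPair_inj hnn (Prod.ext_iff.2 ⟨hval.1, hval.2⟩))
    · rintro ⟨⟨i, j⟩, hij⟩
      rcases hij with ⟨t, ht, hpe⟩ | ⟨t, ht1, ht2, hme⟩
      · refine ⟨⟨t, lt_of_lt_of_le ht hk⟩, ?_⟩
        dsimp only
        rw [dif_pos ht]
        apply Subtype.ext
        rw [Prod.ext_iff] at hpe
        dsimp only at hpe
        simp only [Prod.mk.injEq]
        exact ⟨Fin.ext hpe.1, Fin.ext hpe.2⟩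
      · refine ⟨⟨t, ht2⟩, ?_⟩
        dsimp only
        rw [dif_neg (not_lt.2 ht1)]
        apply Subtype.ext
        rw [Prod.ext_iff] at hme
        dsimp only at hme
        simp only [Prod.mk.injEq]
        exact ⟨Fin.ext hme.1, Fin.ext hme.2⟩
  rw [← key, Nat.card_eq_fintype_card, Fintype.card_fin]

lemma homK2_card {n : ℕ} (G : Fin n → Fin n → Prop) :
    Nat.card {f : Fin 2 → Fin n // ∀ x y, K2dir x y → G (f x) (f y)} =
      Nat.card {q : Fin n × Fin n // G q.1 q.2} := by
  apply Nat.card_congr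
  refine ⟨fun f => ⟨(f.1 0, f.1 1), f.2 0 1 ⟨rfl, rfl⟩⟩,
    fun q => ⟨![q.1.1, q.1.2], ?_⟩, ?_, ?_⟩
  · rintro x y ⟨hx, hy⟩
    subst hx; subst hy
    simpa using q.2
  · rintro ⟨f, hf⟩
    apply Subtype.ext
    funext i
    fin_cases i <;> simp
  · rintro ⟨⟨q1, q2⟩, hq⟩
    apply Subtype.ext
    simp

lemma hom_zero {B : β → β → Prop} {m : ℕ} (hm : 0 < m)
    (hv : 0 < Fintype.card β) (he : 0 < eB B)
    {a b c : β} (hab : B a b) (hbc : B b c) :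
    Nat.card {f : β → Fin (DD B * m) // ∀ x y, B x y → Gr B m 0 (f x) (f y)} = 0 := by
  rw [Nat.card_eq_zero]
  left
  constructor
  rintro ⟨f, hf⟩
  have h1 := hf a b hab
  have h2 := hf b c hbc
  have hb1 : NN B m ≤ ((f b) : ℕ) := by
    rcases h1 with ⟨t, ht, -⟩ | ⟨t, -, -, hme⟩
    · omega
    · rw [mPair, Prod.mk.injEq] at hme
      rw [← hme.2]; exact Nat.le_add_right _ _
  have hb2 : ((f b) : ℕ) < NN B m := by
    rcases h2 with ⟨t, ht, -⟩ | ⟨t, -, -, hme⟩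
    · omega
    · rw [mPair, Prod.mk.injEq] at hme
      rw [← hme.1]; exact Nat.mod_lt _ (NN_pos hv he hm)
  omega

open Classical in
/-- The injection used for the lower bound on homomorphisms into the blow-up. -/
noncomputable def FF (B : β → β → Prop) (m : ℕ) (hvmn : Fintype.card β * m ≤ DD B * m)
    (g : ∀ x : β, Fin (if x ∈ SI B then m else DD B * m)) : β → Fin (DD B * m) :=
  fun x =>
    if hx : x ∈ SI B then
      ⟨nu x * m + ((g x) : ℕ),
        lt_of_lt_of_le (pos_lt_vm (lt_of_lt_of_le (g x).2 (le_of_eq (if_pos hx)))) hvmn⟩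
    else ⟨((g x) : ℕ), lt_of_lt_of_le (g x).2 (le_of_eq (if_neg hx))⟩

open Classical in
lemma FF_pos {B : β → β → Prop} {m : ℕ} (hvmn : Fintype.card β * m ≤ DD B * m)
    (g : ∀ x : β, Fin (if x ∈ SI B then m else DD B * m)) {x : β} (hx : x ∈ SI B) :
    ((FF B m hvmn g x) : ℕ) = nu x * m + ((g x) : ℕ) := by
  simp only [FF, dif_pos hx]

open Classical in
lemma FF_neg {B : β → β → Prop} {m : ℕ} (hvmn : Fintype.card β * m ≤ DD B * m)
    (g : ∀ x : β, Fin (if x ∈ SI B then m else DD B * m)) {x : β} (hx : x ∉ SI B) :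
    ((FF B m hvmn g x) : ℕ) = ((g x) : ℕ) := by
  simp only [FF, dif_neg hx]

open Classical in
lemma hom_top {B : β → β → Prop} {m : ℕ} (hm : 0 < m) :
    m ^ vI B * (DD B * m) ^ (Fintype.card β - vI B) ≤
      Nat.card {f : β → Fin (DD B * m) // ∀ x y, B x y → Gr B m (m0 B m) (f x) (f y)} := by
  classical
  have hvmn : Fintype.card β * m ≤ DD B * m := by
    have h1 := vm_le_NN B m
    have h2 := two_NN B m
    omega
  have hhom : ∀ g, ∀ x y, B x y →
      Gr B m (m0 B m) (FF B m hvmn g x) (FF B m hvmn g y) := by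
    intro g x y hxy
    have hxS : x ∈ SI B := by
      rw [SI, Finset.mem_filter]
      exact ⟨Finset.mem_univ _, Or.inl ⟨y, hxy⟩⟩
    have hyS : y ∈ SI B := by
      rw [SI, Finset.mem_filter]
      exact ⟨Finset.mem_univ _, Or.inr ⟨x, hxy⟩⟩
    have hgx : ((g x) : ℕ) < m := lt_of_lt_of_le (g x).2 (le_of_eq (if_pos hxS))
    have hgy : ((g y) : ℕ) < m := lt_of_lt_of_le (g y).2 (le_of_eq (if_pos hyS))
    exact gr_top hm hxy hgx hgy (FF_pos hvmn g hxS) (FF_pos hvmn g hyS)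
  have hinj : Function.Injective (fun g =>
      (⟨FF B m hvmn g, hhom g⟩ :
        {f : β → Fin (DD B * m) // ∀ x y, B x y → Gr B m (m0 B m) (f x) (f y)})) := by
    intro g g' hgg
    have hF : FF B m hvmn g = FF B m hvmn g' := congrArg Subtype.val hgg
    funext x
    have hx' : ((FF B m hvmn g x) : ℕ) = ((FF B m hvmn g' x) : ℕ) :=
      congrArg (fun z : Fin (DD B * m) => (z : ℕ)) (congrFun hF x)
    by_cases hx : x ∈ SI B
    · rw [FF_pos hvmn g hx, FF_pos hvmn g' hx] at hx'
      exact Fin.ext (by omega)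
    · rw [FF_neg hvmn g hx, FF_neg hvmn g' hx] at hx'
      exact Fin.ext hx'
  have hcard := Nat.card_le_card_of_injective _ hinj
  have hdom : Nat.card (∀ x : β, Fin (if x ∈ SI B then m else DD B * m)) =
      m ^ vI B * (DD B * m) ^ (Fintype.card β - vI B) := by
    rw [Nat.card_eq_fintype_card, Fintype.card_pi]
    have hcongr : ∀ x ∈ (Finset.univ : Finset β),
        Fintype.card (Fin (if x ∈ SI B then m else DD B * m)) =
          (if x ∈ SI B then m else DD B * m) :=
      fun x _ => Fintype.card_fin _
    rw [Finset.prod_congr rfl hcongr, Finset.prod_ite (fun _ => m) (fun _ => DD B * m),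
      Finset.prod_const, Finset.prod_const]
    have hA : (Finset.univ.filter (fun x : β => x ∈ SI B)).card = vI B := by
      rw [Finset.filter_mem_eq_inter, Finset.univ_inter]; rfl
    have hBc : (Finset.univ.filter (fun x : β => ¬ x ∈ SI B)).card =
        Fintype.card β - vI B := by
      have hset : Finset.univ.filter (fun x : β => ¬ x ∈ SI B) =
          Finset.univ \ SI B := by
        ext z; simp
      rw [hset, Finset.card_sdiff_of_subset (Finset.subset_univ _), Finset.card_univ]
      rfl
    rw [hA, hBc]
  rw [← hdom]
  exact hcard

open Classical in
lemma hom_card_le {B : β → β → Prop} (hB : IsOriented B) {n : ℕ}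
    (G1 G2 : Fin n → Fin n → Prop) (u w : ℕ)
    (harc : ∀ i j : Fin n, G1 i j → G2 i j ∨ ((i:ℕ), (j:ℕ)) = (u, w)) :
    Nat.card {f : β → Fin n // ∀ x y, B x y → G1 (f x) (f y)} ≤
      Nat.card {f : β → Fin n // ∀ x y, B x y → G2 (f x) (f y)} +
        eB B * n ^ (Fintype.card β - 2) := by
  classical
  have hedge : ∀ q : β × β, q ∈ ED B →
      (Finset.univ.filter fun f : β → Fin n =>
        ((f q.1 : ℕ), (f q.2 : ℕ)) = (u, w)).card ≤ n ^ (Fintype.card β - 2) := by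
    intro q hq
    have hne : q.1 ≠ q.2 := fun h => hB.1 q.2 (h ▸ mem_ED.1 hq)
    have hsub : Fintype.card {z : β // z ≠ q.1 ∧ z ≠ q.2} = Fintype.card β - 2 := by
      rw [Fintype.card_subtype]
      have hset : Finset.univ.filter (fun z : β => z ≠ q.1 ∧ z ≠ q.2) =
          Finset.univ \ {q.1, q.2} := by
        ext z
        simp [not_or]
      rw [hset, Finset.card_sdiff_of_subset (Finset.subset_univ _), Finset.card_univ,
        Finset.card_pair hne]
    have hinj2 : Set.InjOn
        (fun (f : β → Fin n) => fun (z : {z : β // z ≠ q.1 ∧ z ≠ q.2}) => f z.1)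
        (Finset.univ.filter fun f : β → Fin n =>
          ((f q.1 : ℕ), (f q.2 : ℕ)) = (u, w)) := by
      intro f hf f' hf' hr
      rw [Finset.coe_filter] at hf hf'
      simp only [Set.mem_setOf_eq, Prod.mk.injEq] at hf hf'
      funext z
      by_cases hz1 : z = q.1
      · subst hz1
        exact Fin.ext (hf.2.1.trans hf'.2.1.symm)
      · by_cases hz2 : z = q.2
        · subst hz2
          exact Fin.ext (hf.2.2.trans hf'.2.2.symm)
        · exact congrFun hr ⟨z, hz1, hz2⟩
    calc (Finset.univ.filter fun f : β → Fin n =>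
        ((f q.1 : ℕ), (f q.2 : ℕ)) = (u, w)).card
        ≤ (Finset.univ : Finset ({z : β // z ≠ q.1 ∧ z ≠ q.2} → Fin n)).card :=
          Finset.card_le_card_of_injOn _ (fun _ _ => Finset.mem_univ _) hinj2
      _ = n ^ (Fintype.card β - 2) := by
          rw [Finset.card_univ, Fintype.card_fun, Fintype.card_fin, hsub]
  have hbadcard :
      Nat.card {f : β → Fin n // ∃ x y, B x y ∧ ((f x : ℕ), (f y : ℕ)) = (u, w)} ≤
        eB B * n ^ (Fintype.card β - 2) := by
    rw [Nat.card_eq_fintype_card, Fintype.card_subtype]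
    have hsubset : (Finset.univ.filter fun f : β → Fin n =>
        ∃ x y, B x y ∧ ((f x : ℕ), (f y : ℕ)) = (u, w)) ⊆
        (ED B).biUnion (fun q => Finset.univ.filter fun f : β → Fin n =>
          ((f q.1 : ℕ), (f q.2 : ℕ)) = (u, w)) := by
      intro f hf
      rw [Finset.mem_filter] at hf
      obtain ⟨-, x, y, hxy, hval⟩ := hf
      rw [Finset.mem_biUnion]
      exact ⟨(x, y), mem_ED.2 hxy, by rw [Finset.mem_filter]; exact ⟨Finset.mem_univ _, hval⟩⟩
    calc (Finset.univ.filter fun f : β → Fin n =>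
        ∃ x y, B x y ∧ ((f x : ℕ), (f y : ℕ)) = (u, w)).card
        ≤ ((ED B).biUnion (fun q => Finset.univ.filter fun f : β → Fin n =>
            ((f q.1 : ℕ), (f q.2 : ℕ)) = (u, w))).card := Finset.card_le_card hsubset
      _ ≤ ∑ q ∈ ED B, (Finset.univ.filter fun f : β → Fin n =>
            ((f q.1 : ℕ), (f q.2 : ℕ)) = (u, w)).card := Finset.card_biUnion_le
      _ ≤ ∑ _q ∈ ED B, n ^ (Fintype.card β - 2) :=
            Finset.sum_le_sum (fun q hq => hedge q hq)
      _ = eB B * n ^ (Fintype.card β - 2) := by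
            rw [Finset.sum_const, smul_eq_mul]; rfl
  have hsum : Nat.card {f : β → Fin n // ∀ x y, B x y → G1 (f x) (f y)} ≤
      Nat.card ({f : β → Fin n // ∀ x y, B x y → G2 (f x) (f y)} ⊕
        {f : β → Fin n // ∃ x y, B x y ∧ ((f x : ℕ), (f y : ℕ)) = (u, w)}) := by
    apply Nat.card_le_card_of_injective (f := fun fp =>
      if hq : (∀ x y, B x y → G2 (fp.1 x) (fp.1 y)) then Sum.inl ⟨fp.1, hq⟩
      else Sum.inr ⟨fp.1, by
        push_neg at hq
        obtain ⟨x, y, hxy, hng⟩ := hq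
        rcases harc _ _ (fp.2 x y hxy) with h | h
        · exact absurd h hng
        · exact ⟨x, y, hxy, h⟩⟩)
    intro f g hfg
    dsimp only at hfg
    by_cases h1 : (∀ x y, B x y → G2 (f.1 x) (f.1 y)) <;>
      by_cases h2 : (∀ x y, B x y → G2 (g.1 x) (g.1 y))
    · rw [dif_pos h1, dif_pos h2] at hfg
      have h3 := Sum.inl.inj hfg
      have h4 := congrArg Subtype.val h3
      exact Subtype.ext h4
    · rw [dif_pos h1, dif_neg h2] at hfg
      exact absurd hfg (by simp)
    · rw [dif_neg h1, dif_pos h2] at hfg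
      exact absurd hfg (by simp)
    · rw [dif_neg h1, dif_neg h2] at hfg
      have h3 := Sum.inr.inj hfg
      have h4 := congrArg Subtype.val h3
      exact Subtype.ext h4
  calc Nat.card {f : β → Fin n // ∀ x y, B x y → G1 (f x) (f y)}
      ≤ Nat.card ({f : β → Fin n // ∀ x y, B x y → G2 (f x) (f y)} ⊕
        {f : β → Fin n // ∃ x y, B x y ∧ ((f x : ℕ), (f y : ℕ)) = (u, w)}) := hsum
    _ = Nat.card {f : β → Fin n // ∀ x y, B x y → G2 (f x) (f y)} +
        Nat.card {f : β → Fin n // ∃ x y, B x y ∧ ((f x : ℕ), (f y : ℕ)) = (u, w)} :=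
          Nat.card_sum
    _ ≤ Nat.card {f : β → Fin n // ∀ x y, B x y → G2 (f x) (f y)} +
        eB B * n ^ (Fintype.card β - 2) := Nat.add_le_add_left hbadcard _

lemma gr_fwd {B : β → β → Prop} {m k : ℕ} (i j : Fin (DD B * m))
    (h : Gr B m k i j) :
    Gr B m (k+1) i j ∨ ((i:ℕ), (j:ℕ)) = mPair B m k := by
  rcases h with ⟨t, ht, hpe⟩ | ⟨t, ht1, ht2, hme⟩
  · exact Or.inl (Or.inl ⟨t, by omega, hpe⟩)
  · rcases Nat.eq_or_lt_of_le ht1 with h | h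
    · exact Or.inr (by rw [← h] at hme; exact hme.symm)
    · exact Or.inl (Or.inr ⟨t, by omega, ht2, hme⟩)

lemma gr_bwd {B : β → β → Prop} {m k : ℕ} (hk : k < m0 B m) (i j : Fin (DD B * m))
    (h : Gr B m (k+1) i j) :
    Gr B m k i j ∨ ((i:ℕ), (j:ℕ)) = pPair B m k := by
  rcases h with ⟨t, ht, hpe⟩ | ⟨t, ht1, ht2, hme⟩
  · rcases Nat.lt_or_ge t k with h | h
    · exact Or.inl (Or.inl ⟨t, h, hpe⟩)
    · have : t = k := by omega
      subst this
      exact Or.inr hpe.symm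
  · exact Or.inl (Or.inr ⟨t, by omega, ht2, hme⟩)

lemma two_le_eB {B : β → β → Prop} (hB : IsOriented B) {a b c : β}
    (hab : B a b) (hbc : B b c) : 2 ≤ eB B := by
  have h1 : ((a, b) : β × β) ∈ ED B := mem_ED.2 hab
  have h2 : ((b, c) : β × β) ∈ ED B := mem_ED.2 hbc
  have hne : ((a, b) : β × β) ≠ (b, c) := by
    intro h
    rw [Prod.mk.injEq] at h
    exact hB.1 b (h.1 ▸ hab)
  exact Finset.one_lt_card.2 ⟨_, h1, _, h2, hne⟩

lemma three_le_v {B : β → β → Prop} (hB : IsOriented B) {a b c : β}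
    (hab : B a b) (hbc : B b c) : 3 ≤ Fintype.card β := by
  classical
  have hab' : a ≠ b := fun h => hB.1 b (h ▸ hab)
  have hbc' : b ≠ c := fun h => hB.1 c (h ▸ hbc)
  have hac : a ≠ c := fun h => hB.2 b c hbc (h ▸ hab)
  have hcard : ({a, b, c} : Finset β).card = 3 := by
    rw [Finset.card_insert_of_notMem (by simp [hab', hac]),
      Finset.card_insert_of_notMem (by simp [hbc']), Finset.card_singleton]
  calc (3:ℕ) = ({a,b,c} : Finset β).card := hcard.symm
  _ ≤ Fintype.card β := by
      rw [← Finset.card_univ]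
      exact Finset.card_le_card (Finset.subset_univ _)

lemma vI_le_v (B : β → β → Prop) : vI B ≤ Fintype.card β := by
  rw [vI, ← Finset.card_univ]
  exact Finset.card_le_card (Finset.subset_univ _)

open Classical in
lemma vI_lt {B : β → β → Prop} (hB : IsOriented B) {a b c : β}
    (hab : B a b) (hbc : B b c) : vI B + 1 ≤ 2 * eB B := by
  classical
  have hone : ((a,b) : β × β) ∈ ED B := mem_ED.2 hab
  have htwo : ((b,c) : β × β) ∈ ED B := mem_ED.2 hbc
  have hne : ((b,c) : β × β) ≠ (a, b) := by
    intro h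
    rw [Prod.mk.injEq] at h
    exact hB.1 c (h.2 ▸ hbc)
  have hsub : SI B ⊆ ((ED B).erase (a,b)).biUnion (fun p => {p.1, p.2}) ∪ {a} := by
    intro x hx
    rw [SI, Finset.mem_filter] at hx
    rcases hx.2 with ⟨y, hxy⟩ | ⟨y, hyx⟩
    · by_cases hcase : ((x, y) : β × β) = (a, b)
      · rw [Prod.mk.injEq] at hcase
        exact Finset.mem_union_right _ (by simp [hcase.1])
      · exact Finset.mem_union_left _ (Finset.mem_biUnion.2
          ⟨(x,y), Finset.mem_erase.2 ⟨hcase, mem_ED.2 hxy⟩, by simp⟩)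
    · by_cases hcase : ((y, x) : β × β) = (a, b)
      · rw [Prod.mk.injEq] at hcase
        exact Finset.mem_union_left _ (Finset.mem_biUnion.2
          ⟨(b,c), Finset.mem_erase.2 ⟨hne, htwo⟩, by simp [hcase.2]⟩)
      · exact Finset.mem_union_left _ (Finset.mem_biUnion.2
          ⟨(y,x), Finset.mem_erase.2 ⟨hcase, mem_ED.2 hyx⟩, by simp⟩)
  have hcb : vI B ≤ 2 * (eB B - 1) + 1 := by
    calc vI B ≤ (((ED B).erase (a,b)).biUnion (fun p => ({p.1, p.2} : Finset β)) ∪ {a}).card :=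
        Finset.card_le_card hsub
    _ ≤ (((ED B).erase (a,b)).biUnion (fun p => ({p.1, p.2} : Finset β))).card + 1 := by
        have h5 := Finset.card_union_le
          (((ED B).erase (a,b)).biUnion (fun p => ({p.1, p.2} : Finset β))) ({a} : Finset β)
        simpa using h5
    _ ≤ (∑ p ∈ (ED B).erase (a,b), ({p.1, p.2} : Finset β).card) + 1 :=
        Nat.add_le_add_right Finset.card_biUnion_le 1
    _ ≤ (∑ _p ∈ (ED B).erase (a,b), 2) + 1 := by
        refine Nat.add_le_add_right (Finset.sum_le_sum fun p _ => ?_) 1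
        exact (Finset.card_insert_le _ _).trans (by simp)
    _ = 2 * (eB B - 1) + 1 := by
        rw [Finset.sum_const, smul_eq_mul, Finset.card_erase_of_mem hone, Nat.mul_comm]; rfl
  have he2 : 2 ≤ eB B := two_le_eB hB hab hbc
  omega

lemma key_nat {B : β → β → Prop} (hvI : vI B + 1 ≤ 2 * eB B) (hv : 3 ≤ Fintype.card β) :
    eB B ^ eB B * DD B ^ vI B ≤ DD B ^ (2 * eB B) := by
  have hee : 0 < eB B ^ eB B := by
    rcases Nat.eq_zero_or_pos (eB B) with h | h
    · simp [h]
    · exact pow_pos h _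
  have hD1 : eB B ^ eB B ≤ DD B := by
    rw [DD]
    calc eB B ^ eB B = 1 * eB B ^ eB B := (one_mul _).symm
    _ ≤ (8 * Fintype.card β) * eB B ^ eB B := Nat.mul_le_mul_right _ (by omega)
  have hDpos : 0 < DD B := lt_of_lt_of_le hee hD1
  calc eB B ^ eB B * DD B ^ vI B ≤ DD B * DD B ^ vI B := Nat.mul_le_mul_right _ hD1
  _ = DD B ^ (vI B + 1) := by rw [pow_succ, Nat.mul_comm]
  _ ≤ DD B ^ (2 * eB B) := Nat.pow_le_pow_right hDpos hvI

open Classical in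
lemma exists_good_k {B : β → β → Prop} (hB : IsOriented B) {a b c : β}
    (hab : B a b) (hbc : B b c) (m : ℕ) (hm : 0 < m) :
    ∃ k, k ≤ m0 B m ∧
      ((eB B : ℝ) / (DD B : ℝ)^2) ^ (eB B) * ((DD B * m : ℕ) : ℝ) ^ (Fintype.card β) ≤
        (Nat.card {f : β → Fin (DD B * m) // ∀ x y, B x y → Gr B m k (f x) (f y)} : ℝ) ∧
      (Nat.card {f : β → Fin (DD B * m) // ∀ x y, B x y → Gr B m k (f x) (f y)} : ℝ) ≤
        ((eB B : ℝ) / (DD B : ℝ)^2) ^ (eB B) * ((DD B * m : ℕ) : ℝ) ^ (Fintype.card β)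
          + (eB B : ℝ) * ((DD B * m : ℕ) : ℝ) ^ (Fintype.card β - 2) := by
  classical
  have hv3 : 3 ≤ Fintype.card β := three_le_v hB hab hbc
  have he2 : 2 ≤ eB B := two_le_eB hB hab hbc
  have hv : 0 < Fintype.card β := by omega
  have he : 0 < eB B := by omega
  have hvI : vI B + 1 ≤ 2 * eB B := vI_lt hB hab hbc
  have hvIv : vI B ≤ Fintype.card β := vI_le_v B
  have hDpos : 0 < DD B := by
    have h1 : 0 < eB B ^ eB B := pow_pos he _
    exact Nat.mul_pos (Nat.mul_pos (by norm_num) hv) h1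
  have hnpos : 0 < DD B * m := Nat.mul_pos hDpos hm
  have hnR : (0:ℝ) < ((DD B * m : ℕ) : ℝ) := by exact_mod_cast hnpos
  have hDR : (0:ℝ) < (DD B : ℝ) := by exact_mod_cast hDpos
  set p : ℝ := (eB B : ℝ) / (DD B : ℝ)^2 with hp
  have hppos : 0 < p := by
    rw [hp]; positivity
  set tgt : ℝ := p ^ (eB B) * ((DD B * m : ℕ) : ℝ) ^ (Fintype.card β) with htgt
  have htgtpos : 0 < tgt := by rw [htgt]; positivity
  set cnt : ℕ → ℕ := fun k =>
    Nat.card {f : β → Fin (DD B * m) // ∀ x y, B x y → Gr B m k (f x) (f y)} with hcnt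
  have hPm0 : tgt ≤ (cnt (m0 B m) : ℝ) := by
    have hkey : (eB B:ℝ)^(eB B) * (DD B:ℝ)^(vI B) ≤ (DD B:ℝ)^(2 * eB B) := by
      exact_mod_cast key_nat hvI hv3
    have h1 : p ^ (eB B) = (eB B:ℝ)^(eB B) / (DD B:ℝ)^(2*eB B) := by
      rw [hp, div_pow, ← pow_mul]
    have hn : ((DD B * m : ℕ) : ℝ) = (DD B : ℝ) * (m:ℝ) := by push_cast; ring
    have hsplit : ((DD B * m:ℕ):ℝ)^(Fintype.card β) =
        ((DD B:ℝ)^(vI B) * (m:ℝ)^(vI B)) * ((DD B * m:ℕ):ℝ)^(Fintype.card β - vI B) := by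
      rw [← mul_pow, ← hn, ← pow_add]
      congr 1
      omega
    have hfrac : (eB B:ℝ)^(eB B) * (DD B:ℝ)^(vI B) / (DD B:ℝ)^(2*eB B) ≤ 1 := by
      rw [div_le_one (by positivity)]
      exact hkey
    have hchain : tgt ≤ ((m ^ vI B * (DD B * m) ^ (Fintype.card β - vI B) : ℕ) : ℝ) := by
      calc tgt = ((eB B:ℝ)^(eB B) * (DD B:ℝ)^(vI B) / (DD B:ℝ)^(2*eB B)) *
          ((m:ℝ)^(vI B) * ((DD B * m:ℕ):ℝ)^(Fintype.card β - vI B)) := by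
            rw [htgt, h1, hsplit]; ring
      _ ≤ 1 * ((m:ℝ)^(vI B) * ((DD B * m:ℕ):ℝ)^(Fintype.card β - vI B)) := by
            apply mul_le_mul_of_nonneg_right hfrac (by positivity)
      _ = ((m ^ vI B * (DD B * m) ^ (Fintype.card β - vI B) : ℕ) : ℝ) := by
            push_cast; ring
    refine hchain.trans ?_
    exact_mod_cast hom_top hm
  have hPex : ∃ k, tgt ≤ (cnt k : ℝ) := ⟨m0 B m, hPm0⟩
  set K := Nat.find hPex with hK
  have hKle : K ≤ m0 B m := Nat.find_le hPm0
  have hKspec : tgt ≤ (cnt K : ℝ) := Nat.find_spec hPex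
  have hK1 : 1 ≤ K := by
    by_contra hcon
    have hK0 : K = 0 := by omega
    have h0 : cnt 0 = 0 := hom_zero hm hv he hab hbc
    rw [hK0, h0] at hKspec
    simp only [Nat.cast_zero] at hKspec
    linarith
  have hnot : ¬ (tgt ≤ (cnt (K-1) : ℝ)) := Nat.find_min hPex (by omega)
  have hstep : cnt K ≤ cnt (K-1) + eB B * (DD B * m) ^ (Fintype.card β - 2) := by
    have hKm : K - 1 < m0 B m := by omega
    have hsucc : (K - 1) + 1 = K := by omega
    have harc : ∀ i j : Fin (DD B * m), Gr B m ((K-1)+1) i j →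
        Gr B m (K-1) i j ∨ ((i:ℕ), (j:ℕ)) =
          ((pPair B m (K-1)).1, (pPair B m (K-1)).2) := by
      intro i j hij
      rcases gr_bwd hKm i j hij with h | h
      · exact Or.inl h
      · right
        rw [h]
    have := hom_card_le hB (Gr B m ((K-1)+1)) (Gr B m (K-1))
      (pPair B m (K-1)).1 (pPair B m (K-1)).2 harc
    rwa [hsucc] at this
  refine ⟨K, hKle, hKspec, ?_⟩
  have hlt : (cnt (K-1) : ℝ) < tgt := lt_of_not_ge hnot
  have hstepR : (cnt K : ℝ) ≤ (cnt (K-1) : ℝ) +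
      (eB B : ℝ) * ((DD B * m : ℕ) : ℝ) ^ (Fintype.card β - 2) := by
    have := hstep
    push_cast
    exact_mod_cast this
  calc (cnt K : ℝ) ≤ (cnt (K-1) : ℝ) +
      (eB B : ℝ) * ((DD B * m : ℕ) : ℝ) ^ (Fintype.card β - 2) := hstepR
  _ ≤ tgt + (eB B : ℝ) * ((DD B * m : ℕ) : ℝ) ^ (Fintype.card β - 2) := by linarith

lemma gr_tail {B : β → β → Prop} {m k : ℕ} (hm : 0 < m) (hk : k ≤ m0 B m)
    (hv : 0 < Fintype.card β) (he : 0 < eB B)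
    {i j : Fin (DD B * m)} (h : Gr B m k i j) : (i:ℕ) < NN B m := by
  rcases gr_spec hm hk hv he h with ⟨x, y, r, s, -, hr, -, h1, -⟩ | ⟨h1, -⟩
  · rw [h1]
    exact lt_of_lt_of_le (pos_lt_vm hr) (vm_le_NN B m)
  · exact h1

lemma step_vanish {n : ℕ} (G : Fin n → Fin n → Prop) (N : ℕ) (h2 : n = 2 * N)
    (htail : ∀ i j, G i j → (i:ℕ) < N) {x : ℝ} (hx : 1/2 ≤ x) (y : ℝ) :
    stepGraphon G x y = 0 := by
  rw [stepGraphon, if_neg]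
  rintro ⟨i, j, hij, hxi, -⟩
  have hiN := htail i j hij
  have hn0 : (0:ℝ) < (n:ℝ) := by
    have := i.pos
    exact_mod_cast this
  have hN0 : 0 < N := by
    have := i.pos
    omega
  have hx2 : x < (((i:ℕ):ℝ) + 1)/(n:ℝ) := hxi.2
  have hle : (((i:ℕ):ℝ) + 1) ≤ (N:ℝ) := by exact_mod_cast hiN
  have hdiv : (((i:ℕ):ℝ) + 1)/(n:ℝ) ≤ (N:ℝ)/(n:ℝ) := by gcongr
  have hN2 : (N:ℝ)/(n:ℝ) = 1/2 := by
    rw [h2]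
    push_cast
    rw [div_eq_iff (by positivity)]
    ring
  linarith

lemma step_measurable {n : ℕ} (G : Fin n → Fin n → Prop) :
    Measurable (fun z : ℝ × ℝ => stepGraphon G z.1 z.2) := by
  classical
  have heq : (fun z : ℝ × ℝ => stepGraphon G z.1 z.2) = fun z =>
      Set.indicator (⋃ (i : Fin n) (j : Fin n) (_ : G i j),
        (Set.Ico (((i : ℕ) : ℝ)/n) ((((i : ℕ) : ℝ) + 1)/n)) ×ˢ
        (Set.Ico (((j : ℕ) : ℝ)/n) ((((j : ℕ) : ℝ) + 1)/n))) (fun _ => (1:ℝ)) z := by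
    funext z
    rw [stepGraphon]
    split_ifs with h
    · refine (Set.indicator_of_mem ?_ (fun _ => (1:ℝ))).symm
      simp only [Set.mem_iUnion, Set.mem_prod]
      obtain ⟨i, j, h1, h2, h3⟩ := h
      exact ⟨i, j, h1, h2, h3⟩
    · refine (Set.indicator_of_notMem ?_ (fun _ => (1:ℝ))).symm
      intro hmem
      apply h
      simp only [Set.mem_iUnion, Set.mem_prod] at hmem
      obtain ⟨i, j, h1, h2, h3⟩ := hmem
      exact ⟨i, j, h1, h2, h3⟩
  rw [heq]
  apply Measurable.indicator measurable_const
  apply MeasurableSet.iUnion; intro i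
  apply MeasurableSet.iUnion; intro j
  apply MeasurableSet.iUnion; intro _
  exact (measurableSet_Ico.prod measurableSet_Ico)

lemma step_abs {n : ℕ} (G : Fin n → Fin n → Prop) (p x y : ℝ)
    (hp0 : 0 ≤ p) (hp1 : p ≤ 1) : |stepGraphon G x y - p| ≤ 1 := by
  rw [stepGraphon]
  split_ifs with h <;> rw [abs_le] <;> constructor <;> linarith

lemma cutNorm_ge {n : ℕ} (G : Fin n → Fin n → Prop) (p : ℝ) (hp0 : 0 ≤ p) (hp1 : p ≤ 1)
    (N : ℕ) (h2 : n = 2 * N) (htail : ∀ i j, G i j → (i:ℕ) < N) :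
    p / 2 ≤ cutNorm (fun x y => stepGraphon G x y - p) := by
  have hmeas : Measurable (fun z : ℝ × ℝ => stepGraphon G z.1 z.2 - p) :=
    (step_measurable G).sub measurable_const
  have hbdd : BddAbove (Set.range fun ST :
      {S : Set ℝ // MeasurableSet S ∧ S ⊆ Set.Icc 0 1} ×
      {T : Set ℝ // MeasurableSet T ∧ T ⊆ Set.Icc 0 1} =>
      |∫ z in (ST.1.1 ×ˢ ST.2.1), (fun x y => stepGraphon G x y - p) z.1 z.2|) := by
    refine ⟨1, ?_⟩
    rintro r ⟨⟨S, T⟩, rfl⟩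
    have hμ : volume (S.1 ×ˢ T.1) ≤ 1 := by
      calc volume (S.1 ×ˢ T.1) ≤ volume ((Set.Icc (0:ℝ) 1) ×ˢ (Set.Icc (0:ℝ) 1)) :=
        measure_mono (Set.prod_mono S.2.2 T.2.2)
      _ = 1 := by
        rw [Measure.volume_eq_prod, Measure.prod_prod, Real.volume_Icc]
        norm_num
    have hlt : volume (S.1 ×ˢ T.1) < ⊤ := lt_of_le_of_lt hμ (by norm_num)
    have hbound : ∀ z ∈ S.1 ×ˢ T.1, ‖stepGraphon G z.1 z.2 - p‖ ≤ 1 := by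
      intro z _
      rw [Real.norm_eq_abs]
      exact step_abs G p z.1 z.2 hp0 hp1
    have hint := MeasureTheory.norm_setIntegral_le_of_norm_le_const hlt hbound
    calc |∫ z in S.1 ×ˢ T.1, (stepGraphon G z.1 z.2 - p)|
        = ‖∫ z in S.1 ×ˢ T.1, (stepGraphon G z.1 z.2 - p)‖ := (Real.norm_eq_abs _).symm
      _ ≤ 1 * (volume (S.1 ×ˢ T.1)).toReal := hint
      _ ≤ 1 := by
          rw [one_mul]
          refine ENNReal.toReal_le_of_le_ofReal (by norm_num) ?_
          simpa [ENNReal.ofReal_one] using hμ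
  have hST : p/2 = |∫ z in (Set.Icc (1/2 : ℝ) 1) ×ˢ (Set.Icc (0:ℝ) 1),
      (fun x y => stepGraphon G x y - p) z.1 z.2| := by
    have hcongr : ∫ z in (Set.Icc (1/2 : ℝ) 1) ×ˢ (Set.Icc (0:ℝ) 1),
        (stepGraphon G z.1 z.2 - p) =
        ∫ _z in (Set.Icc (1/2 : ℝ) 1) ×ˢ (Set.Icc (0:ℝ) 1), (-p) := by
      apply MeasureTheory.setIntegral_congr_fun (measurableSet_Icc.prod measurableSet_Icc)
      rintro ⟨x, y⟩ ⟨hx, _⟩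
      have h0 : stepGraphon G x y = 0 := step_vanish G N h2 htail hx.1 y
      simp [h0]
    have hvol : volume ((Set.Icc (1/2 : ℝ) 1) ×ˢ (Set.Icc (0:ℝ) 1)) =
        ENNReal.ofReal (1/2) := by
      rw [Measure.volume_eq_prod, Measure.prod_prod, Real.volume_Icc, Real.volume_Icc]
      norm_num
    show p/2 = |∫ z in (Set.Icc (1/2 : ℝ) 1) ×ˢ (Set.Icc (0:ℝ) 1),
      (stepGraphon G z.1 z.2 - p)|
    rw [hcongr, MeasureTheory.setIntegral_const, measureReal_def, hvol, smul_eq_mul,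
      ENNReal.toReal_ofReal (by norm_num)]
    have hcalc : (1/2 : ℝ) * (-p) = -(p/2) := by ring
    rw [hcalc, abs_neg, abs_of_nonneg (by positivity)]
  rw [cutNorm, hST]
  exact le_ciSup hbdd
    ⟨⟨Set.Icc (1/2 : ℝ) 1, measurableSet_Icc, Set.Icc_subset_Icc (by norm_num) le_rfl⟩,
     ⟨Set.Icc (0:ℝ) 1, measurableSet_Icc, subset_rfl⟩⟩

lemma edgeCount_eq (B : β → β → Prop) : edgeCount B = eB B := by
  rw [edgeCount]
  have hequiv : {p : β × β // B p.1 p.2} ≃ {p : β × β // p ∈ ED B} :=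
    Equiv.subtypeEquivRight (fun p => (mem_ED (p := p)).symm)
  rw [Nat.card_congr hequiv, Nat.card_eq_fintype_card, Fintype.card_coe]
  rfl

end Main

end DFP

open DFP in
/-- If an oriented graph `B` has the directed forcing property, then
there is a homomorphism `B → K2→`. -/
theorem dirForcing_implies_hom_to_K2
    {β : Type} [Fintype β] (B : β → β → Prop) (hB : IsOriented B)
    (h : DirForcing B) :
    ∃ f : β → Fin 2, ∀ x y, B x y → K2dir (f x) (f y) := by
  classical
  by_contra hno
  push_neg at hno
  obtain ⟨a0, b0, c0, hab, hbc⟩ : ∃ a b c, B a b ∧ B b c := by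
    obtain ⟨x, y, hxy, hnk⟩ := hno (fun z => if ∃ w, B w z then 1 else 0)
    by_cases hx : ∃ w, B w x
    · obtain ⟨w, hwx⟩ := hx
      exact ⟨w, x, y, hwx, hxy⟩
    · exact absurd ⟨if_neg hx, if_pos ⟨x, hxy⟩⟩ hnk
  haveI : Nonempty β := ⟨b0⟩
  have hv3 : 3 ≤ Fintype.card β := three_le_v hB hab hbc
  have he2 : 2 ≤ eB B := two_le_eB hB hab hbc
  have hv : 0 < Fintype.card β := by omega
  have he : 0 < eB B := by omega
  have hDpos : 0 < DD B :=
    Nat.mul_pos (Nat.mul_pos (by norm_num) hv) (pow_pos he _)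
  have hDR : (0:ℝ) < (DD B : ℝ) := by exact_mod_cast hDpos
  set p : ℝ := (eB B : ℝ) / (DD B : ℝ)^2 with hpdef
  have hppos : 0 < p := by rw [hpdef]; positivity
  have hDD2 : 2 * eB B ≤ DD B * DD B := by
    have h1 : eB B ≤ eB B ^ eB B := Nat.le_self_pow (by omega) _
    have h2 : eB B ^ eB B ≤ DD B := by
      rw [DD]
      calc eB B ^ eB B = 1 * eB B ^ eB B := (one_mul _).symm
      _ ≤ (8 * Fintype.card β) * eB B ^ eB B := Nat.mul_le_mul_right _ (by omega)
    have h3 : eB B ≤ DD B := le_trans h1 h2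
    have h4 : 2 ≤ DD B := le_trans (by omega) h3
    calc 2 * eB B ≤ 2 * DD B := Nat.mul_le_mul_left _ h3
    _ ≤ DD B * DD B := Nat.mul_le_mul_right _ h4
  have hphalf : p ≤ 1/2 := by
    have hc : ((2 * eB B : ℕ):ℝ) ≤ ((DD B * DD B : ℕ):ℝ) := by exact_mod_cast hDD2
    push_cast at hc
    rw [hpdef, div_le_div_iff₀ (by positivity) (by norm_num)]
    nlinarith [hc]
  have hp1 : p ≤ 1 := le_trans hphalf (by norm_num)
  -- choose the interpolation index for each size
  have hgood := fun k : ℕ => exists_good_k hB hab hbc (k+1) (Nat.succ_pos k)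
  choose KK hKle hKlo hKhi using hgood
  -- the graph sequence
  have hVpos : ∀ k : ℕ, 0 < DD B * (k+1) := fun k => Nat.mul_pos hDpos (Nat.succ_pos k)
  have hor : ∀ k : ℕ, IsOriented (Gr B (k+1) (KK k)) :=
    fun k => gr_oriented hB (Nat.succ_pos k) (hKle k) hv he
  have hnR : ∀ k : ℕ, (0:ℝ) < ((DD B * (k+1) : ℕ) : ℝ) := by
    intro k
    exact_mod_cast hVpos k
  -- first premise : edge density is exactly p
  have hden1 : ∀ k, homDensity K2dir (Gr B (k+1) (KK k)) = p := by
    intro k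
    rw [homDensity, homK2_card, card_arcs (Nat.succ_pos k) (hKle k) hv he]
    simp only [Fintype.card_fin]
    rw [m0, hpdef]
    have hk1 : ((k:ℝ) + 1) ≠ 0 := by positivity
    push_cast
    rw [div_eq_div_iff (by positivity) (by positivity)]
    ring
  have hprem1 : Filter.Tendsto (fun k => homDensity K2dir (Gr B (k+1) (KK k)))
      Filter.atTop (nhds p) :=
    Filter.Tendsto.congr (fun k => (hden1 k).symm) tendsto_const_nhds
  -- second premise
  have hedge : edgeCount B = eB B := edgeCount_eq B
  have hden2 : ∀ k : ℕ, homDensity B (Gr B (k+1) (KK k)) =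
      (Nat.card {f : β → Fin (DD B * (k+1)) //
          ∀ x y, B x y → Gr B (k+1) (KK k) (f x) (f y)} : ℝ) /
        ((DD B * (k+1) : ℕ) : ℝ) ^ (Fintype.card β) := by
    intro k
    rw [homDensity, Fintype.card_fin]
  have hlo : ∀ k : ℕ, p ^ eB B ≤ homDensity B (Gr B (k+1) (KK k)) := by
    intro k
    rw [hden2 k, le_div_iff₀ (by positivity)]
    exact hKlo k
  have hhi : ∀ k : ℕ, homDensity B (Gr B (k+1) (KK k)) ≤
      p ^ eB B + (eB B : ℝ) / ((DD B * (k+1) : ℕ) : ℝ)^2 := by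
    intro k
    rw [hden2 k, div_le_iff₀ (by positivity)]
    have hvsplit : ((DD B * (k+1) : ℕ) : ℝ) ^ (Fintype.card β) =
        ((DD B * (k+1) : ℕ) : ℝ) ^ (Fintype.card β - 2) * ((DD B * (k+1) : ℕ) : ℝ)^2 := by
      rw [← pow_add]
      congr 1
      omega
    calc (Nat.card {f : β → Fin (DD B * (k+1)) //
          ∀ x y, B x y → Gr B (k+1) (KK k) (f x) (f y)} : ℝ)
        ≤ p ^ eB B * ((DD B * (k+1) : ℕ) : ℝ) ^ (Fintype.card β) +
          (eB B : ℝ) * ((DD B * (k+1) : ℕ) : ℝ) ^ (Fintype.card β - 2) := hKhi k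
      _ = (p ^ eB B + (eB B : ℝ) / ((DD B * (k+1) : ℕ) : ℝ)^2) *
          ((DD B * (k+1) : ℕ) : ℝ) ^ (Fintype.card β) := by
          rw [hvsplit]
          have hne : ((DD B * (k+1) : ℕ) : ℝ) ≠ 0 := ne_of_gt (hnR k)
          field_simp
  have hboundk : ∀ k : ℕ, (eB B : ℝ) / ((DD B * (k+1) : ℕ) : ℝ)^2 ≤
      (eB B : ℝ) * (1/((k:ℝ)+1)) := by
    intro k
    have hDk : ((k:ℝ)+1) ≤ ((DD B * (k+1) : ℕ):ℝ)^2 := by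
      have h1 : (k+1 : ℕ) ≤ (DD B * (k+1))^2 := by
        calc k+1 ≤ DD B * (k+1) := Nat.le_mul_of_pos_left _ hDpos
        _ ≤ (DD B * (k+1))^2 := Nat.le_self_pow (by norm_num) _
      exact_mod_cast h1
    rw [mul_one_div, div_le_div_iff₀ (by positivity) (by positivity)]
    exact mul_le_mul_of_nonneg_left hDk (by positivity)
  have hb0 : Filter.Tendsto (fun k : ℕ => (eB B : ℝ) / ((DD B * (k+1) : ℕ) : ℝ)^2)
      Filter.atTop (nhds 0) := by
    refine squeeze_zero (fun k => by positivity) hboundk ?_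
    have := tendsto_one_div_add_atTop_nhds_zero_nat.const_mul (eB B : ℝ)
    simpa using this
  have hup : Filter.Tendsto
      (fun k : ℕ => p ^ eB B + (eB B : ℝ) / ((DD B * (k+1) : ℕ) : ℝ)^2)
      Filter.atTop (nhds (p ^ eB B)) := by
    have hconst : Filter.Tendsto (fun _ : ℕ => p ^ eB B) Filter.atTop (nhds (p ^ eB B)) :=
      tendsto_const_nhds
    simpa using hconst.add hb0
  have hprem2 : Filter.Tendsto (fun k => homDensity B (Gr B (k+1) (KK k))) Filter.atTop
      (nhds (p ^ edgeCount B)) := by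
    rw [hedge]
    exact tendsto_of_tendsto_of_tendsto_of_le_of_le tendsto_const_nhds hup hlo hhi
  have hcut := h p ⟨le_of_lt hppos, hphalf⟩ (fun k => DD B * (k+1))
    (fun k => Gr B (k+1) (KK k)) hVpos hor hprem1 hprem2
  have hlow : ∀ k : ℕ, p/2 ≤ cutNorm (fun x y => stepGraphon (Gr B (k+1) (KK k)) x y - p) := by
    intro k
    exact cutNorm_ge (Gr B (k+1) (KK k)) p (le_of_lt hppos) hp1 (NN B (k+1)) (two_NN B (k+1))
      (fun i j hg => gr_tail (Nat.succ_pos k) (hKle k) hv he hg)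
  have hfin := ge_of_tendsto' hcut hlow
  linarith
end

section
/- If a bipartite undirected graph A with fixed bipartition A₁ ⊔ A₂ has the asymmetric Sidorenko property, then A has the Sidorenko property: for every undirected graph H, t(A, H) ≥ t(K₂, H)^{e(A)}, where t(A, H) is the fraction of all maps V(A) → V(H) that are graph homomorphisms and t(K₂, H) = 2·e(H)/v(H)². -/
open MeasureTheory Filter Topology

/-- Undirected homomorphism density between finite simple graphs: the fraction of all
vertex maps that are graph homomorphisms. -/
noncomputable def uHomDensity {α β : Type} [Fintype α] [Fintype β]
    (A : SimpleGraph α) (H : SimpleGraph β) : ℝ :=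
  (Nat.card {f : α → β // ∀ x y, A.Adj x y → H.Adj (f x) (f y)} : ℝ) /
    (Fintype.card β : ℝ) ^ (Fintype.card α)

/-- The bipartite graph with parts `α₁, α₂` and edge relation `E`, viewed as an
undirected simple graph on the vertex set `α₁ ⊕ α₂`. -/
def bipToSimple {α₁ α₂ : Type} (E : α₁ → α₂ → Prop) : SimpleGraph (α₁ ⊕ α₂) :=
  SimpleGraph.fromRel (orient E)

/-
Since `H` is symmetric, a map `α₁ ⊕ α₂ → V(H)` is a homomorphism of the undirected graph exactly
when its two restrictions form a part-respecting homomorphism into `H` read as a bipartite graph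
with both parts `V(H)`. So `t(A, H)` is the bipartite density of `A` in that bipartite graph, whose
edge density is `t(K₂, H)`, and the asymmetric Sidorenko property applies with `U₁ = U₂ = V(H)`.
-/

section
variable {α₁ α₂ β : Type} (E : α₁ → α₂ → Prop)

@[simp]
theorem bipToSimple_adj_inl_inr (a : α₁) (b : α₂) :
    (bipToSimple E).Adj (.inl a) (.inr b) ↔ E a b := by
  simp [bipToSimple, orient]

theorem bipToSimple_adj_iff {x y : α₁ ⊕ α₂} :
    (bipToSimple E).Adj x y ↔
      ∃ a b, E a b ∧ (x = .inl a ∧ y = .inr b ∨ x = .inr b ∧ y = .inl a) := by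
  rcases x with a | b <;> rcases y with a' | b' <;> simp [bipToSimple, orient]

theorem bipToSimple_hom_iff (H : SimpleGraph β) (f : α₁ ⊕ α₂ → β) :
    (∀ x y, (bipToSimple E).Adj x y → H.Adj (f x) (f y)) ↔
      ∀ a b, E a b → H.Adj (f (.inl a)) (f (.inr b)) := by
  refine ⟨fun hf a b hab => hf _ _ ((bipToSimple_adj_inl_inr E a b).2 hab), fun hf x y hxy => ?_⟩
  obtain ⟨a, b, hab, ⟨rfl, rfl⟩ | ⟨rfl, rfl⟩⟩ := (bipToSimple_adj_iff E).1 hxy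
  · exact hf a b hab
  · exact (hf a b hab).symm

theorem uHomDensity_bipToSimple [Fintype α₁] [Fintype α₂] {n : ℕ} (H : SimpleGraph (Fin n)) :
    uHomDensity (bipToSimple E) H = bipHomDensity E H.Adj := by
  have hcard := Nat.card_congr <|
    (Equiv.sumArrowEquivProdArrow α₁ α₂ (Fin n)).subtypeEquiv
      (q := fun fg => ∀ a b, E a b → H.Adj (fg.1 a) (fg.2 b)) (bipToSimple_hom_iff E H)
  rw [uHomDensity, bipHomDensity, hcard, Fintype.card_sum, Fintype.card_fin, pow_add]

end

/-- If a bipartite graph `A` with fixed bipartition (parts `α₁, α₂`,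
edge relation `E`) has the asymmetric Sidorenko property, then `A` has the Sidorenko
property: for every (nonempty) undirected graph `H`,
`t(A, H) ≥ t(K₂, H)^{e(A)}`, where `t(K₂, H) = 2 e(H)/v(H)²` is the number of ordered
adjacent pairs of `H` divided by `v(H)²`. -/
theorem asymSidorenko_implies_sidorenko
    {α₁ α₂ : Type} [Fintype α₁] [Fintype α₂] (E : α₁ → α₂ → Prop)
    (h : AsymSidorenko E) :
    ∀ (n : ℕ), 0 < n → ∀ H : SimpleGraph (Fin n),
      uHomDensity (bipToSimple E) H ≥
        ((Nat.card {q : Fin n × Fin n // H.Adj q.1 q.2} : ℝ) / (n : ℝ) ^ 2)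
          ^ bipEdgeCount E := by
  intro n hn H
  rw [uHomDensity_bipToSimple, sq]
  exact h n n hn hn H.Adj
end
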